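/- arXiv:1912.02300 — 9 statements merged into one kernel-verified Lean document; each statement's English description precedes it below -/
import Mathlib

section
/- For every K ∈ ℝ it holds that ub^imp ≤ K if and only if f(K) ≤ 0. -/
/-- `ubImp k m s` is the improved upper bound `ub^imp`: the maximum, over all
admissible interval tuples `(I_1, …, I_k)` with `I_l = [a_l, b_l] ⊆ [1, m_l]`,
of `(∑_l ∑_{i ∈ I_l} s^l_i) / (∑_l |I_l|)`. -/
noncomputable def ubImp (k : ℕ) (m : Fin k → ℕ) (s : Fin k → ℕ → ℝ) : ℝ :=
  sSup {r : ℝ | ∃ a b : Fin k → ℕ, (∀ l, 1 ≤ a l ∧ a l ≤ b l ∧ b l ≤ m l) ∧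
    r = (∑ l : Fin k, ∑ i ∈ Finset.Icc (a l) (b l), s l i) /
        (∑ l : Fin k, ((Finset.Icc (a l) (b l)).card : ℝ))}

/-- `fFun k m s K` is the function
`f(K) = ∑_l max_{I = [a,b] ⊆ [1, m_l]} (∑_{i ∈ I} s^l_i − K·|I|)`. -/
noncomputable def fFun (k : ℕ) (m : Fin k → ℕ) (s : Fin k → ℕ → ℝ) (K : ℝ) : ℝ :=
  ∑ l : Fin k, sSup {r : ℝ | ∃ a b : ℕ, 1 ≤ a ∧ a ≤ b ∧ b ≤ m l ∧
    r = (∑ i ∈ Finset.Icc a b, s l i) - K * ((Finset.Icc a b).card : ℝ)}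

/-!
For an admissible tuple with numerator `N = ∑_l ∑_{i ∈ I_l} s^l_i` and denominator
`D = ∑_l |I_l| > 0`, the inequality `N / D ≤ K` is equivalent to
`∑_l (∑_{i ∈ I_l} s^l_i - K |I_l|) ≤ 0`. Hence `ub^imp ≤ K` says that this separable sum is
nonpositive for every tuple, i.e. that its maximum is nonpositive; and the maximum of a
separable sum is the sum `f(K)` of the maxima of its terms.
-/

open Finset

lemma finite_setOf_interval_values (n : ℕ) (g : ℕ → ℕ → ℝ) :
    {r : ℝ | ∃ a b : ℕ, 1 ≤ a ∧ a ≤ b ∧ b ≤ n ∧ r = g a b}.Finite := by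
  refine (((Set.finite_Icc 1 n).prod (Set.finite_Icc 1 n)).image fun p => g p.1 p.2).subset ?_
  rintro r ⟨a, b, ha, hab, hb, rfl⟩
  exact ⟨(a, b), ⟨⟨ha, hab.trans hb⟩, ⟨ha.trans hab, hb⟩⟩, rfl⟩

lemma finite_setOf_interval_tuple_values {ι : Type*} [Finite ι] (m : ι → ℕ)
    (g : (ι → ℕ) → (ι → ℕ) → ℝ) :
    {r : ℝ | ∃ a b : ι → ℕ, (∀ l, 1 ≤ a l ∧ a l ≤ b l ∧ b l ≤ m l) ∧ r = g a b}.Finite := by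
  have hIcc : ∀ l, (Set.Icc 1 (m l)).Finite := fun l => Set.finite_Icc 1 (m l)
  refine (((Set.Finite.pi' hIcc).prod (Set.Finite.pi' hIcc)).image fun p => g p.1 p.2).subset ?_
  rintro r ⟨a, b, hab, rfl⟩
  exact ⟨(a, b), ⟨fun l => ⟨(hab l).1, (hab l).2.1.trans (hab l).2.2⟩,
    fun l => ⟨(hab l).1.trans (hab l).2.1, (hab l).2.2⟩⟩, rfl⟩

lemma ubImp_le_iff {k : ℕ} {m : Fin k → ℕ} (hm : ∀ l, 1 ≤ m l) (s : Fin k → ℕ → ℝ) (c : ℝ) :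
    ubImp k m s ≤ c ↔ ∀ a b : Fin k → ℕ, (∀ l, 1 ≤ a l ∧ a l ≤ b l ∧ b l ≤ m l) →
      (∑ l, ∑ i ∈ Icc (a l) (b l), s l i) / (∑ l, ((Icc (a l) (b l)).card : ℝ)) ≤ c := by
  rw [ubImp, csSup_le_iff (finite_setOf_interval_tuple_values m _).bddAbove
    ⟨_, fun _ => 1, fun _ => 1, fun l => ⟨le_rfl, le_rfl, hm l⟩, rfl⟩]
  constructor
  · exact fun h a b hab => h _ ⟨a, b, hab, rfl⟩
  · rintro h _ ⟨a, b, hab, rfl⟩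
    exact h a b hab

lemma fFun_le_iff {k : ℕ} {m : Fin k → ℕ} (hm : ∀ l, 1 ≤ m l) (s : Fin k → ℕ → ℝ)
    (K c : ℝ) :
    fFun k m s K ≤ c ↔ ∀ a b : Fin k → ℕ, (∀ l, 1 ≤ a l ∧ a l ≤ b l ∧ b l ≤ m l) →
      ∑ l, (∑ i ∈ Icc (a l) (b l), s l i - K * (Icc (a l) (b l)).card) ≤ c := by
  have hfin := fun l => finite_setOf_interval_values (m l)
    fun a b => ∑ i ∈ Icc a b, s l i - K * (Icc a b).card
  constructor
  · intro h a b hab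
    refine le_trans (sum_le_sum fun l _ => ?_) h
    exact le_csSup (hfin l).bddAbove ⟨a l, b l, (hab l).1, (hab l).2.1, (hab l).2.2, rfl⟩
  · intro h
    have hmax := fun l => Set.Nonempty.csSup_mem (by exact ⟨_, 1, 1, le_rfl, le_rfl, hm l, rfl⟩)
      (hfin l)
    choose a b ha hab hb hsup using hmax
    rw [fFun, sum_congr rfl fun l _ => hsup l]
    exact h a b fun l => ⟨ha l, hab l, hb l⟩

lemma sum_card_Icc_pos {k : ℕ} (hk : 1 ≤ k) {a b : Fin k → ℕ} (hab : ∀ l, a l ≤ b l) :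
    0 < ∑ l, ((Icc (a l) (b l)).card : ℝ) :=
  sum_pos (fun l _ => mod_cast (nonempty_Icc.mpr (hab l)).card_pos)
    ⟨⟨0, hk⟩, mem_univ _⟩

theorem stmt1 (k : ℕ) (hk : 1 ≤ k) (m : Fin k → ℕ) (hm : ∀ l, 1 ≤ m l)
    (s : Fin k → ℕ → ℝ) (K : ℝ) :
    ubImp k m s ≤ K ↔ fFun k m s K ≤ 0 := by
  rw [ubImp_le_iff hm, fFun_le_iff hm]
  refine forall₂_congr fun a b => imp_congr_right fun hab => ?_
  rw [div_le_iff₀ (sum_card_Icc_pos hk fun l => (hab l).2.1), sum_sub_distrib, ← mul_sum,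
    sub_nonpos]
end

section
/- It holds that f(ub^imp) = 0; in particular, ub^imp is the unique root of f. -/
/-! For a fixed tuple of intervals, `∑_l (∑_{i ∈ I_l} s^l_i - K |I_l|)` equals
`(∑ sums) - K (∑ lengths)`, which is `≤ 0` exactly when the tuple's ratio is `≤ K`. At
`K = ub^imp` the tuple attaining `ub^imp` therefore gives `f ≥ 0`, while the tuple of
componentwise maximisers has ratio `≤ ub^imp` and gives `f ≤ 0`. Since every interval has
length `≥ 1`, each summand of `f` is strictly decreasing in `K`, so the root is unique. -/

open Finset

section FractionalOptimization

variable {β : Type*} {C : Set β} {num den : β → ℝ}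

noncomputable def maxGain (C : Set β) (num den : β → ℝ) (K : ℝ) : ℝ :=
  sSup ((fun c => num c - K * den c) '' C)

theorem le_maxGain (hC : C.Finite) {c : β} (hc : c ∈ C) (K : ℝ) :
    num c - K * den c ≤ maxGain C num den K :=
  le_csSup (hC.image _).bddAbove (Set.mem_image_of_mem _ hc)

theorem exists_maxGain_eq (hC : C.Finite) (hne : C.Nonempty) (K : ℝ) :
    ∃ c ∈ C, maxGain C num den K = num c - K * den c := by
  obtain ⟨c, hc, hmax⟩ :=
    (hne.image fun c => num c - K * den c).csSup_mem (hC.image fun c => num c - K * den c)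
  exact ⟨c, hc, hmax.symm⟩

theorem maxGain_strictAnti (hC : C.Finite) (hne : C.Nonempty) (hden : ∀ c ∈ C, 0 < den c) :
    StrictAnti (maxGain C num den) := by
  intro K₁ K₂ hK
  obtain ⟨c, hc, hmax⟩ := exists_maxGain_eq (num := num) (den := den) hC hne K₂
  calc maxGain C num den K₂ = num c - K₂ * den c := hmax
    _ < num c - K₁ * den c := sub_lt_sub_left (mul_lt_mul_of_pos_right hK (hden c hc)) _
    _ ≤ maxGain C num den K₁ := le_maxGain hC hc K₁

variable {ι : Type*} [Fintype ι] {α : ι → Type*} {C : ∀ l, Set (α l)} {num den : ∀ l, α l → ℝ}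

noncomputable def bestRatio (C : ∀ l, Set (α l)) (num den : ∀ l, α l → ℝ) : ℝ :=
  sSup ((fun c : ∀ l, α l => (∑ l, num l (c l)) / ∑ l, den l (c l)) '' Set.univ.pi C)

theorem ratio_le_bestRatio (hC : ∀ l, (C l).Finite) {c : ∀ l, α l} (hc : c ∈ Set.univ.pi C) :
    (∑ l, num l (c l)) / (∑ l, den l (c l)) ≤ bestRatio C num den :=
  le_csSup ((Set.Finite.pi hC).image _).bddAbove (Set.mem_image_of_mem _ hc)

theorem exists_bestRatio_eq (hC : ∀ l, (C l).Finite) (hne : ∀ l, (C l).Nonempty) :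
    ∃ c ∈ Set.univ.pi C, bestRatio C num den = (∑ l, num l (c l)) / ∑ l, den l (c l) := by
  let ratio := fun c : ∀ l, α l => (∑ l, num l (c l)) / ∑ l, den l (c l)
  obtain ⟨c, hc, hmax⟩ :=
    ((Set.univ_pi_nonempty_iff.mpr hne).image ratio).csSup_mem ((Set.Finite.pi hC).image ratio)
  exact ⟨c, hc, hmax.symm⟩

variable [Nonempty ι]

theorem sum_maxGain_bestRatio (hC : ∀ l, (C l).Finite) (hne : ∀ l, (C l).Nonempty)
    (hden : ∀ l, ∀ c ∈ C l, 0 < den l c) :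
    ∑ l, maxGain (C l) (num l) (den l) (bestRatio C num den) = 0 := by
  set R := bestRatio C num den
  have hsum_den : ∀ c ∈ Set.univ.pi C, 0 < ∑ l, den l (c l) := fun c hc =>
    sum_pos (fun l _ => hden l (c l) (hc l trivial)) univ_nonempty
  have hgain : ∀ c : ∀ l, α l,
      ∑ l, (num l (c l) - R * den l (c l)) = ∑ l, num l (c l) - R * ∑ l, den l (c l) :=
    fun c => by rw [sum_sub_distrib, mul_sum]
  apply le_antisymm
  · choose c hc hmax using fun l => exists_maxGain_eq (num := num l) (den := den l) (hC l) (hne l) R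
    have hratio := ratio_le_bestRatio hC (c := c) (num := num) (den := den) fun l _ => hc l
    rw [div_le_iff₀ (hsum_den c fun l _ => hc l)] at hratio
    rw [sum_congr rfl fun l _ => hmax l, hgain]
    linarith
  · obtain ⟨c, hc, hR⟩ := exists_bestRatio_eq (num := num) (den := den) hC hne
    have hnum : ∑ l, num l (c l) = R * ∑ l, den l (c l) := by
      rw [show R = _ from hR, div_mul_cancel₀ _ (hsum_den c hc).ne']
    calc (0 : ℝ) = ∑ l, (num l (c l) - R * den l (c l)) := by rw [hgain, hnum, sub_self]
      _ ≤ ∑ l, maxGain (C l) (num l) (den l) R :=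
        sum_le_sum fun l _ => le_maxGain (hC l) (hc l trivial) R

theorem eq_bestRatio_of_sum_maxGain_eq_zero (hC : ∀ l, (C l).Finite)
    (hne : ∀ l, (C l).Nonempty) (hden : ∀ l, ∀ c ∈ C l, 0 < den l c) {K : ℝ}
    (hK : ∑ l, maxGain (C l) (num l) (den l) K = 0) : K = bestRatio C num den := by
  have hanti : StrictAnti fun K => ∑ l, maxGain (C l) (num l) (den l) K := fun K₁ K₂ h =>
    sum_lt_sum_of_nonempty univ_nonempty fun l _ =>
      maxGain_strictAnti (hC l) (hne l) (hden l) h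
  exact hanti.injective (hK.trans (sum_maxGain_bestRatio hC hne hden).symm)

end FractionalOptimization

/-- The pair `(a, b)` stands for the interval `{a, …, b}`. -/
def intervalSet (n : ℕ) : Set (ℕ × ℕ) := {p | 1 ≤ p.1 ∧ p.1 ≤ p.2 ∧ p.2 ≤ n}

theorem intervalSet_finite (n : ℕ) : (intervalSet n).Finite :=
  ((Set.finite_Icc 1 n).prod (Set.finite_Icc 1 n)).subset
    fun _ ⟨h₁, h₁₂, h₂⟩ => ⟨⟨h₁, h₁₂.trans h₂⟩, ⟨h₁.trans h₁₂, h₂⟩⟩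

theorem intervalSet_nonempty {n : ℕ} (hn : 1 ≤ n) : (intervalSet n).Nonempty :=
  ⟨(1, 1), le_rfl, le_rfl, hn⟩

theorem fFun_eq_sum_maxGain (k : ℕ) (m : Fin k → ℕ) (s : Fin k → ℕ → ℝ) (K : ℝ) :
    fFun k m s K = ∑ l, maxGain (intervalSet (m l)) (fun p => ∑ i ∈ Icc p.1 p.2, s l i)
      (fun p => ((Icc p.1 p.2).card : ℝ)) K := by
  refine sum_congr rfl fun l _ => congrArg sSup ?_
  ext r
  simp [intervalSet, eq_comm, and_assoc]

theorem ubImp_eq_bestRatio (k : ℕ) (m : Fin k → ℕ) (s : Fin k → ℕ → ℝ) :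
    ubImp k m s = bestRatio (fun l => intervalSet (m l)) (fun l p => ∑ i ∈ Icc p.1 p.2, s l i)
      (fun _ p => ((Icc p.1 p.2).card : ℝ)) := by
  refine congrArg sSup (Set.ext fun r => ⟨?_, ?_⟩)
  · rintro ⟨a, b, hab, rfl⟩
    exact ⟨fun l => (a l, b l), fun l _ => hab l, rfl⟩
  · rintro ⟨c, hc, rfl⟩
    exact ⟨fun l => (c l).1, fun l => (c l).2, fun l => hc l trivial, rfl⟩

theorem stmt3 (k : ℕ) (hk : 1 ≤ k) (m : Fin k → ℕ) (hm : ∀ l, 1 ≤ m l)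
    (s : Fin k → ℕ → ℝ) :
    fFun k m s (ubImp k m s) = 0 ∧
    ∀ K : ℝ, fFun k m s K = 0 → K = ubImp k m s := by
  have : Nonempty (Fin k) := ⟨⟨0, hk⟩⟩
  have hC := fun l => intervalSet_finite (m l)
  have hne := fun l => intervalSet_nonempty (hm l)
  have hden : ∀ l, ∀ p ∈ intervalSet (m l), (0 : ℝ) < (Icc p.1 p.2).card :=
    fun _ _ hp => by exact_mod_cast (nonempty_Icc.mpr hp.2.1).card_pos
  simp only [fFun_eq_sum_maxGain, ubImp_eq_bestRatio]
  exact ⟨sum_maxGain_bestRatio hC hne hden,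
    fun K hK => eq_bestRatio_of_sum_maxGain_eq_zero hC hne hden hK⟩
end

section
/- Let s ∈ ℝ^m and z ∈ ℝ^n be time series, and let L ≤ U be real numbers with L ≤ z_j ≤ U for all j ∈ {1,…,n}. Then for every warping path P of order m×n, C_P(s,z) ≥ ∑_{i=1}^m pen(s_i; L, U); consequently, dtw(s,z)² ≥ ∑_{i=1}^m pen(s_i; L, U). -/
/-!
Along a warping path the first coordinate moves by at most one per step, from `1` to `m`, so
every index `i ∈ [1, m]` occurs as the first coordinate of some vertex `(i, j)`, where
`j ∈ [1, n]` and hence `L ≤ z j ≤ U`. The term `(s i - z j)²` of that vertex is at least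
`pen(s i; L, U)`; as penalties are nonnegative, the cost therefore dominates the sum of the
penalties. Every path cost having this lower bound, so does their infimum `dtw(s, z)²`.
-/

/-- A warping path of order `m × n`: a finite sequence of pairs of positive
integers starting at `(1,1)`, ending at `(m,n)`, each step increasing the
coordinates by `(1,0)`, `(0,1)` or `(1,1)`. -/
structure WarpingPath (m n : ℕ) where
  len : ℕ
  len_pos : 0 < len
  pt : ℕ → ℕ × ℕ
  first : pt 0 = (1, 1)
  last : pt (len - 1) = (m, n)
  step : ∀ t, t + 1 < len →
    pt (t + 1) = ((pt t).1 + 1, (pt t).2) ∨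
    pt (t + 1) = ((pt t).1, (pt t).2 + 1) ∨
    pt (t + 1) = ((pt t).1 + 1, (pt t).2 + 1)

/-- The set of vertices `V(P)` of a warping path. -/
def WarpingPath.V {m n : ℕ} (P : WarpingPath m n) : Finset (ℕ × ℕ) :=
  (Finset.range P.len).image P.pt

/-- The cost `C_P(s, s') = ∑_{(i,j) ∈ V(P)} (s_i − s'_j)²` of a warping path. -/
noncomputable def WarpingPath.cost {m n : ℕ} (P : WarpingPath m n) (s s' : ℕ → ℝ) : ℝ :=
  ∑ v ∈ P.V, (s v.1 - s' v.2) ^ 2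

/-- The dtw-distance between a time series `s` of length `m` and a time series
`s'` of length `n`: the minimum over all warping paths `P` of order `m × n` of
`√(C_P(s, s'))`. -/
noncomputable def dtw (m n : ℕ) (s s' : ℕ → ℝ) : ℝ :=
  Real.sqrt (sInf {c : ℝ | ∃ P : WarpingPath m n, c = P.cost s s'})

/-- The penalty `pen(a; L, U)`: `(a − U)²` if `a > U`, `(L − a)²` if `a < L`,
and `0` otherwise. -/
noncomputable def pen (L U a : ℝ) : ℝ :=
  if U < a then (a - U) ^ 2 else if a < L then (L - a) ^ 2 else 0

lemma pen_nonneg (L U a : ℝ) : 0 ≤ pen L U a := by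
  unfold pen; split_ifs <;> positivity

lemma pen_le_sq_sub {L U b : ℝ} (hL : L ≤ b) (hU : b ≤ U) (a : ℝ) :
    pen L U a ≤ (a - b) ^ 2 := by
  unfold pen; split_ifs <;> nlinarith

theorem Nat.exists_eq_of_le_succ {f : ℕ → ℕ} {N i : ℕ} (hf : ∀ t < N, f (t + 1) ≤ f t + 1)
    (h0 : f 0 ≤ i) (hN : i ≤ f N) : ∃ t ≤ N, f t = i := by
  induction N with
  | zero => exact ⟨0, le_rfl, le_antisymm h0 hN⟩
  | succ N ih =>
    by_cases hi : i ≤ f N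
    · obtain ⟨t, ht, hft⟩ := ih (fun t ht => hf t (by omega)) hi
      exact ⟨t, by omega, hft⟩
    · exact ⟨N + 1, le_rfl, by have := hf N (by omega); omega⟩

namespace WarpingPath

variable {m n : ℕ} (P : WarpingPath m n)

lemma pt_le_pt_succ {t : ℕ} (ht : t + 1 < P.len) : P.pt t ≤ P.pt (t + 1) := by
  rcases P.step t ht with h | h | h <;> simp [h, Prod.le_def]

lemma pt_mono {t t' : ℕ} (htt' : t ≤ t') (ht' : t' < P.len) : P.pt t ≤ P.pt t' := by
  induction t', htt' using Nat.le_induction with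
  | base => exact le_rfl
  | succ t' _ ih => exact (ih (by omega)).trans (P.pt_le_pt_succ ht')

lemma mem_V_iff {v : ℕ × ℕ} : v ∈ P.V ↔ ∃ t < P.len, P.pt t = v := by
  simp [V]

lemma le_of_mem_V {v : ℕ × ℕ} (hv : v ∈ P.V) : (1, 1) ≤ v ∧ v ≤ (m, n) := by
  obtain ⟨t, ht, rfl⟩ := P.mem_V_iff.1 hv
  constructor
  · simpa only [P.first] using P.pt_mono (Nat.zero_le t) ht
  · simpa only [P.last] using P.pt_mono (Nat.le_sub_one_of_lt ht) (by omega)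

lemma Icc_subset_image_fst_V : Finset.Icc 1 m ⊆ P.V.image Prod.fst := by
  intro i hi
  obtain ⟨hi1, him⟩ := Finset.mem_Icc.1 hi
  have hstep : ∀ t < P.len - 1, (P.pt (t + 1)).1 ≤ (P.pt t).1 + 1 := fun t ht => by
    rcases P.step t (by omega) with h | h | h <;> simp [h]
  obtain ⟨t, ht, hti⟩ := Nat.exists_eq_of_le_succ (f := fun t => (P.pt t).1) hstep
    (by simpa [P.first] using hi1) (by simpa [P.last] using him)
  exact Finset.mem_image.2 ⟨P.pt t, P.mem_V_iff.2 ⟨t, by have := P.len_pos; omega, rfl⟩, hti⟩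

theorem sum_pen_le_cost (s z : ℕ → ℝ) {L U : ℝ}
    (hz : ∀ j ∈ Finset.Icc 1 n, L ≤ z j ∧ z j ≤ U) :
    ∑ i ∈ Finset.Icc 1 m, pen L U (s i) ≤ P.cost s z :=
  calc ∑ i ∈ Finset.Icc 1 m, pen L U (s i)
      ≤ ∑ i ∈ P.V.image Prod.fst, pen L U (s i) :=
        Finset.sum_le_sum_of_subset_of_nonneg P.Icc_subset_image_fst_V
          fun _ _ _ => pen_nonneg _ _ _
    _ ≤ ∑ v ∈ P.V, pen L U (s v.1) :=
        Finset.sum_image_le_of_nonneg fun _ _ => pen_nonneg _ _ _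
    _ ≤ P.cost s z := Finset.sum_le_sum fun v hv => by
        obtain ⟨⟨-, h1⟩, ⟨-, hn⟩⟩ := P.le_of_mem_V hv
        obtain ⟨hL, hU⟩ := hz v.2 (Finset.mem_Icc.2 ⟨h1, hn⟩)
        exact pen_le_sq_sub hL hU _

lemma cost_nonneg (s z : ℕ → ℝ) : 0 ≤ P.cost s z :=
  Finset.sum_nonneg fun _ _ => sq_nonneg _

lemma nonempty (hm : 1 ≤ m) (hn : 1 ≤ n) : Nonempty (WarpingPath m n) := by
  refine ⟨⟨m + n - 1, by omega, fun t => if t < m then (t + 1, 1) else (m, t - m + 2),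
    by simp [show 0 < m by omega], ?_, fun t ht => ?_⟩⟩
  · split_ifs <;> simp only [Prod.ext_iff, true_and] <;> omega
  · by_cases h : t + 1 < m
    · left; simp [show t < m by omega, h]
    · right; left; by_cases h' : t < m <;> simp [h, h', Prod.ext_iff] <;> omega

end WarpingPath

lemma sq_dtw (m n : ℕ) (s z : ℕ → ℝ) :
    dtw m n s z ^ 2 = sInf {c : ℝ | ∃ P : WarpingPath m n, c = P.cost s z} :=
  Real.sq_sqrt <| Real.sInf_nonneg <| by rintro _ ⟨P, rfl⟩; exact P.cost_nonneg s z

theorem stmt5_general (m n : ℕ) (hm : 1 ≤ m) (hn : 1 ≤ n) (s z : ℕ → ℝ)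
    (L U : ℝ) (hz : ∀ j ∈ Finset.Icc 1 n, L ≤ z j ∧ z j ≤ U) :
    (∀ P : WarpingPath m n, P.cost s z ≥ ∑ i ∈ Finset.Icc 1 m, pen L U (s i)) ∧
    (dtw m n s z) ^ 2 ≥ ∑ i ∈ Finset.Icc 1 m, pen L U (s i) := by
  have hcost (P : WarpingPath m n) := P.sum_pen_le_cost s z hz
  refine ⟨hcost, ?_⟩
  obtain ⟨P⟩ := WarpingPath.nonempty hm hn
  rw [sq_dtw]
  exact le_csInf ⟨_, P, rfl⟩ (by rintro _ ⟨P, rfl⟩; exact hcost P)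

theorem stmt5 (m n : ℕ) (hm : 1 ≤ m) (hn : 1 ≤ n) (s z : ℕ → ℝ)
    (L U : ℝ) (hLU : L ≤ U) (hz : ∀ j ∈ Finset.Icc 1 n, L ≤ z j ∧ z j ≤ U) :
    (∀ P : WarpingPath m n, P.cost s z ≥ ∑ i ∈ Finset.Icc 1 m, pen L U (s i)) ∧
    (dtw m n s z) ^ 2 ≥ ∑ i ∈ Finset.Icc 1 m, pen L U (s i) :=
  stmt5_general m n hm hn s z L U hz
end

section
/- Let s ∈ ℝ^m and z ∈ ℝ^n be time series, and for each j ∈ {1,…,n} let L_j ≤ U_j be real numbers with L_j ≤ z_j ≤ U_j. Then dtw(s,z)² ≥ ∑_{i=1}^m min_{j∈{1,…,n}} pen(s_i; L_j, U_j). -/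
/-- Monotonicity of a function whose steps increase by 0 or 1. -/
lemma stepMono (len : ℕ) (f : ℕ → ℕ)
    (hstep : ∀ t, t + 1 < len → f (t+1) = f t ∨ f (t+1) = f t + 1) :
    ∀ b, b < len → ∀ a, a ≤ b → f a ≤ f b := by
  intro b
  induction b with
  | zero => intro _ a ha; have : a = 0 := by omega
            subst this; exact le_refl _
  | succ b ih =>
    intro hb a ha
    rcases Nat.eq_or_lt_of_le ha with h | h
    · subst h; exact le_refl _
    · have h1 : f a ≤ f b := ih (by omega) a (by omega)
      rcases hstep b (by omega) with h2 | h2 <;> omega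

lemma stepHit (len : ℕ) (f : ℕ → ℕ)
    (hstep : ∀ t, t + 1 < len → f (t+1) = f t ∨ f (t+1) = f t + 1) :
    ∀ t, t < len → ∀ i, f 0 ≤ i → i ≤ f t → ∃ t' ≤ t, f t' = i := by
  intro t
  induction t with
  | zero => intro _ i h1 h2; exact ⟨0, le_refl _, by omega⟩
  | succ t ih =>
    intro ht i h1 h2
    by_cases hle : i ≤ f t
    · obtain ⟨t', ht', he⟩ := ih (by omega) i h1 hle
      exact ⟨t', by omega, he⟩
    · rcases hstep t (by omega) with h | h
      · omega
      · exact ⟨t+1, le_refl _, by omega⟩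

/-- An explicit warping path: along the first row, then up the last column. -/
def examplePath (m n : ℕ) (hm : 1 ≤ m) (hn : 1 ≤ n) : WarpingPath m n where
  len := m + n - 1
  len_pos := by omega
  pt t := if t + 1 < n then (1, t + 1) else (t + 2 - n, n)
  first := by
    split_ifs with h
    · rfl
    · simp only [Prod.mk.injEq, and_true, true_and]
      omega
  last := by
    have h : ¬ (m + n - 1 - 1 + 1 < n) := by omega
    rw [if_neg h]
    simp only [Prod.mk.injEq, and_true, true_and]
    omega
  step := by
    intro t ht
    by_cases h2 : t + 1 < n
    · by_cases h1 : t + 1 + 1 < n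
      · right; left
        rw [if_pos h1, if_pos h2]
      · right; left
        rw [if_neg h1, if_pos h2]
        simp only [Prod.mk.injEq, and_true, true_and]
        omega
    · have h1 : ¬ (t + 1 + 1 < n) := by omega
      left
      rw [if_neg h1, if_neg h2]
      simp only [Prod.mk.injEq, and_true, true_and]
      omega

theorem stmt7 (m n : ℕ) (hm : 1 ≤ m) (hn : 1 ≤ n) (s z : ℕ → ℝ)
    (L U : ℕ → ℝ) (hLU : ∀ j ∈ Finset.Icc 1 n, L j ≤ U j)
    (hz : ∀ j ∈ Finset.Icc 1 n, L j ≤ z j ∧ z j ≤ U j) :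
    (dtw m n s z) ^ 2 ≥ ∑ i ∈ Finset.Icc 1 m,
      (Finset.Icc 1 n).inf' (Finset.nonempty_Icc.mpr hn)
        (fun j => pen (L j) (U j) (s i)) := by
  set S : Set ℝ := {c : ℝ | ∃ P : WarpingPath m n, c = P.cost s z} with hS
  have hpen_le : ∀ i j, j ∈ Finset.Icc 1 n → pen (L j) (U j) (s i) ≤ (s i - z j) ^ 2 := by
    intro i j hj
    obtain ⟨h1, h2⟩ := hz j hj
    unfold pen
    split_ifs with hU hL
    · nlinarith
    · nlinarith
    · positivity
  -- the key lower bound for each warping path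
  have hkey : ∀ P : WarpingPath m n,
      (∑ i ∈ Finset.Icc 1 m, (Finset.Icc 1 n).inf' (Finset.nonempty_Icc.mpr hn)
        (fun j => pen (L j) (U j) (s i))) ≤ P.cost s z := by
    intro P
    have hs1 : ∀ t, t + 1 < P.len →
        (P.pt (t+1)).1 = (P.pt t).1 ∨ (P.pt (t+1)).1 = (P.pt t).1 + 1 := by
      intro t ht
      rcases P.step t ht with h | h | h <;> rw [h] <;> simp
    have hs2 : ∀ t, t + 1 < P.len →
        (P.pt (t+1)).2 = (P.pt t).2 ∨ (P.pt (t+1)).2 = (P.pt t).2 + 1 := by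
      intro t ht
      rcases P.step t ht with h | h | h <;> rw [h] <;> simp
    have hf0 : (P.pt 0).1 = 1 := by rw [P.first]
    have hg0 : (P.pt 0).2 = 1 := by rw [P.first]
    have hfl : (P.pt (P.len - 1)).1 = m := by rw [P.last]
    have hgl : (P.pt (P.len - 1)).2 = n := by rw [P.last]
    have hlen : P.len - 1 < P.len := by have := P.len_pos; omega
    -- existence of a vertex in each row
    have hex : ∀ i : ℕ, ∃ t : ℕ, (1 ≤ i ∧ i ≤ m) →
        t < P.len ∧ (P.pt t).1 = i := by
      intro i
      by_cases hi : 1 ≤ i ∧ i ≤ m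
      · obtain ⟨t', ht', he⟩ := stepHit P.len (fun t => (P.pt t).1) hs1
          (P.len - 1) hlen i (show (P.pt 0).1 ≤ i by omega)
          (show i ≤ (P.pt (P.len - 1)).1 by omega)
        exact ⟨t', fun _ => ⟨by omega, he⟩⟩
      · exact ⟨0, fun h => absurd h hi⟩
    choose g hg using hex
    set v : ℕ → ℕ × ℕ := fun i => P.pt (g i) with hv
    have hv1 : ∀ i ∈ Finset.Icc 1 m, (v i).1 = i := by
      intro i hi
      simp only [Finset.mem_Icc] at hi
      exact (hg i hi).2
    have hvlt : ∀ i ∈ Finset.Icc 1 m, g i < P.len := by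
      intro i hi
      simp only [Finset.mem_Icc] at hi
      exact (hg i hi).1
    have hv2 : ∀ i ∈ Finset.Icc 1 m, (v i).2 ∈ Finset.Icc 1 n := by
      intro i hi
      have hlt := hvlt i hi
      have h1 : (P.pt 0).2 ≤ (P.pt (g i)).2 :=
        stepMono P.len (fun t => (P.pt t).2) hs2 (g i) hlt 0 (Nat.zero_le _)
      have h2 : (P.pt (g i)).2 ≤ (P.pt (P.len - 1)).2 :=
        stepMono P.len (fun t => (P.pt t).2) hs2 (P.len - 1) hlen (g i) (by omega)
      simp only [Finset.mem_Icc, hv]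
      omega
    calc (∑ i ∈ Finset.Icc 1 m, (Finset.Icc 1 n).inf' (Finset.nonempty_Icc.mpr hn)
          (fun j => pen (L j) (U j) (s i)))
        ≤ ∑ i ∈ Finset.Icc 1 m, (s (v i).1 - z (v i).2) ^ 2 := by
          apply Finset.sum_le_sum
          intro i hi
          have hmem := hv2 i hi
          calc (Finset.Icc 1 n).inf' (Finset.nonempty_Icc.mpr hn)
                (fun j => pen (L j) (U j) (s i))
              ≤ pen (L (v i).2) (U (v i).2) (s i) := Finset.inf'_le _ hmem
            _ ≤ (s i - z (v i).2) ^ 2 := hpen_le i _ hmem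
            _ = (s (v i).1 - z (v i).2) ^ 2 := by rw [hv1 i hi]
      _ = ∑ w ∈ (Finset.Icc 1 m).image v, (s w.1 - z w.2) ^ 2 := by
          rw [Finset.sum_image]
          intro a ha b hb hab
          have := hv1 a ha
          have := hv1 b hb
          rw [← hv1 a ha, ← hv1 b hb, hab]
      _ ≤ P.cost s z := by
          apply Finset.sum_le_sum_of_subset_of_nonneg
          · intro w hw
            simp only [Finset.mem_image] at hw
            obtain ⟨i, hi, rfl⟩ := hw
            simp only [WarpingPath.V, Finset.mem_image, Finset.mem_range]
            exact ⟨g i, hvlt i hi, rfl⟩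
          · intro w _ _
            positivity
  have hne : S.Nonempty := ⟨(examplePath m n hm hn).cost s z, examplePath m n hm hn, rfl⟩
  have hlb : ∀ c ∈ S, (∑ i ∈ Finset.Icc 1 m, (Finset.Icc 1 n).inf' (Finset.nonempty_Icc.mpr hn)
      (fun j => pen (L j) (U j) (s i))) ≤ c := by
    rintro c ⟨P, rfl⟩
    exact hkey P
  have hlb0 : ∀ c ∈ S, (0:ℝ) ≤ c := by
    rintro c ⟨P, rfl⟩
    unfold WarpingPath.cost
    apply Finset.sum_nonneg
    intro w _
    positivity
  have h0 : 0 ≤ sInf S := le_csInf hne hlb0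
  have h1 : _ ≤ sInf S := le_csInf hne hlb
  unfold dtw
  rw [Real.sq_sqrt h0]
  exact h1
end

section
/- Let m, N ≥ 2 and let D = D(m,N) be the diagonal grid graph. Let x : {1,…,N} → [0,1] satisfy ∑_{j=1}^N x_j = 1, and let f : A(D) → [0,1] satisfy the flow-conservation constraints: f(δ⁺(v)) − f(δ⁻(v)) equals 1 if v = (1,1), equals −x_j if v = (m,j) for some j ∈ {1,…,N}, and equals 0 otherwise. Define y_v := f(δ⁺(v)) + x_j if v = (m,j) for some j, and y_v := f(δ⁺(v)) otherwise. Then y satisfies the relaxed vertex-based path constraints: y_{(1,1)} = 1; 0 ≤ y_v ≤ 1 for all vertices v; y_u ≤ ∑_{(u,v)∈A(D)} y_v for every vertex u not of the form (m,j); and y_u ≤ ∑_{(u,v)∈A(D)} y_v + x_j for every vertex u = (m,j). -/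
/-!
Since `m ≠ 1`, flow conservation rewrites `y v` as the inflow into `v`, plus `1` at the source
`(1,1)`. Every arc of the grid raises the potential `i + j`, so the arcs into `v` all leave the set
`S` of vertices of smaller potential; hence the inflow into `v` is at most the net outflow of `S`,
which is the total supply in `S`, at most `1` because the sinks only absorb flow. The remaining
inequalities follow from `f a ≤ inflow(a.2) ≤ y a.2`.
-/

/-- The vertex set `{1,…,m} × {1,…,n}` of the diagonal grid graph `D(m,n)`. -/
def gridV (m n : ℕ) : Finset (ℕ × ℕ) := Finset.Icc 1 m ×ˢ Finset.Icc 1 n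

/-- The arc set of the diagonal grid graph `D(m,n)`: all arcs from `(i,j)` to
`(i+1,j)`, to `(i,j+1)` and to `(i+1,j+1)` whose endpoints both lie in the
vertex set. -/
def gridA (m n : ℕ) : Finset ((ℕ × ℕ) × (ℕ × ℕ)) :=
  (gridV m n ×ˢ gridV m n).filter (fun a =>
    (a.2.1 = a.1.1 + 1 ∧ a.2.2 = a.1.2) ∨
    (a.2.1 = a.1.1 ∧ a.2.2 = a.1.2 + 1) ∨
    (a.2.1 = a.1.1 + 1 ∧ a.2.2 = a.1.2 + 1))

section Flow

variable {α R : Type*} [DecidableEq α]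

def outFlow [AddCommMonoid R] (A : Finset (α × α)) (f : α × α → R) (v : α) : R :=
  ∑ a ∈ A with a.1 = v, f a

def inFlow [AddCommMonoid R] (A : Finset (α × α)) (f : α × α → R) (v : α) : R :=
  ∑ a ∈ A with a.2 = v, f a

theorem sum_outFlow_sub_inFlow_of_closed [AddCommGroup R] (A : Finset (α × α))
    (f : α × α → R) {S : Finset α} (hS : ∀ a ∈ A, a.2 ∈ S → a.1 ∈ S) :
    ∑ u ∈ S, (outFlow A f u - inFlow A f u) = ∑ a ∈ A with a.1 ∈ S ∧ a.2 ∉ S, f a := by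
  have hsplit := Finset.sum_filter_add_sum_filter_not {a ∈ A | a.1 ∈ S} (·.2 ∈ S) f
  have hin : {a ∈ {a ∈ A | a.1 ∈ S} | a.2 ∈ S} = {a ∈ A | a.2 ∈ S} := by
    ext a
    simp only [Finset.mem_filter]
    exact ⟨fun h => ⟨h.1.1, h.2⟩, fun h => ⟨⟨h.1, hS a h.1 h.2⟩, h.2⟩⟩
  rw [hin, Finset.filter_filter] at hsplit
  unfold outFlow inFlow
  rw [Finset.sum_sub_distrib, Finset.sum_fiberwise_eq_sum_filter,
    Finset.sum_fiberwise_eq_sum_filter, ← hsplit, add_sub_cancel_left]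

theorem inFlow_le_sum_of_potential [AddCommGroup R] [PartialOrder R] [IsOrderedAddMonoid R]
    {β : Type*} [LinearOrder β] {A : Finset (α × α)} {f : α × α → R} {φ : α → β}
    (hφ : ∀ a ∈ A, φ a.1 < φ a.2) {V : Finset α} (hV : ∀ a ∈ A, a.1 ∈ V)
    (hf : ∀ a ∈ A, 0 ≤ f a) (v : α) :
    inFlow A f v ≤ ∑ u ∈ V with φ u < φ v, (outFlow A f u - inFlow A f u) := by
  rw [sum_outFlow_sub_inFlow_of_closed]
  · refine Finset.sum_le_sum_of_subset_of_nonneg (fun a ha => ?_)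
      (fun a ha _ => hf a (Finset.mem_filter.1 ha).1)
    obtain ⟨haA, rfl⟩ := Finset.mem_filter.1 ha
    simp [haA, hV a haA, hφ a haA]
  · intro a ha h2
    simp only [Finset.mem_filter] at h2 ⊢
    exact ⟨hV a ha, (hφ a ha).trans h2.2⟩

theorem le_inFlow [AddCommMonoid R] [PartialOrder R] [IsOrderedAddMonoid R]
    {A : Finset (α × α)} {f : α × α → R} (hf : ∀ a ∈ A, 0 ≤ f a) {a : α × α} (ha : a ∈ A) :
    f a ≤ inFlow A f a.2 :=
  Finset.single_le_sum (fun b hb => hf b (Finset.mem_filter.1 hb).1)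
    (Finset.mem_filter.2 ⟨ha, rfl⟩)

theorem inFlow_nonneg [AddCommMonoid R] [PartialOrder R] [IsOrderedAddMonoid R]
    {A : Finset (α × α)} {f : α × α → R} (hf : ∀ a ∈ A, 0 ≤ f a) (v : α) :
    0 ≤ inFlow A f v :=
  Finset.sum_nonneg fun a ha => hf a (Finset.mem_filter.1 ha).1

end Flow

section Grid

variable {m n : ℕ}

theorem mem_gridV {v : ℕ × ℕ} : v ∈ gridV m n ↔ (1 ≤ v.1 ∧ v.1 ≤ m) ∧ 1 ≤ v.2 ∧ v.2 ≤ n := by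
  simp [gridV]

theorem mem_gridA {a : (ℕ × ℕ) × (ℕ × ℕ)} :
    a ∈ gridA m n ↔ (a.1 ∈ gridV m n ∧ a.2 ∈ gridV m n) ∧
      ((a.2.1 = a.1.1 + 1 ∧ a.2.2 = a.1.2) ∨ (a.2.1 = a.1.1 ∧ a.2.2 = a.1.2 + 1) ∨
        (a.2.1 = a.1.1 + 1 ∧ a.2.2 = a.1.2 + 1)) := by
  simp only [gridA, Finset.mem_filter, Finset.mem_product]

theorem gridA_potential_lt {a : (ℕ × ℕ) × (ℕ × ℕ)} (ha : a ∈ gridA m n) :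
    a.1.1 + a.1.2 < a.2.1 + a.2.2 := by
  rcases (mem_gridA.1 ha).2 with h | h | h <;> omega

theorem one_one_mem_gridV (hm : 1 ≤ m) (hn : 1 ≤ n) : ((1 : ℕ), (1 : ℕ)) ∈ gridV m n :=
  mem_gridV.2 (by omega)

theorem inFlow_gridA_one_one (f : (ℕ × ℕ) × (ℕ × ℕ) → ℝ) :
    inFlow (gridA m n) f ((1 : ℕ), (1 : ℕ)) = 0 := by
  refine Finset.sum_eq_zero fun a ha => absurd (gridA_potential_lt (Finset.mem_filter.1 ha).1) ?_
  have h1 := mem_gridV.1 (mem_gridA.1 (Finset.mem_filter.1 ha).1).1.1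
  rw [(Finset.mem_filter.1 ha).2]
  omega

def gridSupply (m : ℕ) (x : ℕ → ℝ) (v : ℕ × ℕ) : ℝ :=
  if v = ((1 : ℕ), (1 : ℕ)) then 1 else if v.1 = m then -(x v.2) else 0

variable {x : ℕ → ℝ} {f : (ℕ × ℕ) × (ℕ × ℕ) → ℝ}

theorem inFlow_gridA_le_one (hx : ∀ j ∈ Finset.Icc 1 n, 0 ≤ x j)
    (hf : ∀ a ∈ gridA m n, 0 ≤ f a)
    (hflow : ∀ v ∈ gridV m n,
      outFlow (gridA m n) f v - inFlow (gridA m n) f v = gridSupply m x v)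
    (v : ℕ × ℕ) : inFlow (gridA m n) f v ≤ 1 := by
  let S := {u ∈ gridV m n | u.1 + u.2 < v.1 + v.2}
  calc inFlow (gridA m n) f v
      ≤ ∑ u ∈ S, (outFlow (gridA m n) f u - inFlow (gridA m n) f u) :=
        inFlow_le_sum_of_potential (fun a ha => gridA_potential_lt ha)
          (fun a ha => (mem_gridA.1 ha).1.1) hf v
    _ = ∑ u ∈ S, gridSupply m x u :=
        Finset.sum_congr rfl fun u hu => hflow u (Finset.mem_filter.1 hu).1
    _ ≤ ∑ u ∈ S, if u = ((1 : ℕ), (1 : ℕ)) then 1 else 0 := by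
        refine Finset.sum_le_sum fun u hu => ?_
        have hxu := hx u.2 (Finset.mem_Icc.2 (mem_gridV.1 (Finset.mem_filter.1 hu).1).2)
        unfold gridSupply
        split_ifs <;> linarith
    _ ≤ 1 := by
        rw [Finset.sum_ite_eq']
        split_ifs <;> norm_num

theorem outFlow_add_sink_eq_inFlow_add_source (hm : m ≠ 1)
    (hflow : ∀ v ∈ gridV m n,
      outFlow (gridA m n) f v - inFlow (gridA m n) f v = gridSupply m x v)
    {v : ℕ × ℕ} (hv : v ∈ gridV m n) :
    outFlow (gridA m n) f v + (if v.1 = m then x v.2 else 0) =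
      inFlow (gridA m n) f v + if v = ((1 : ℕ), (1 : ℕ)) then 1 else 0 := by
  have h := hflow v hv
  by_cases hsource : v = ((1 : ℕ), (1 : ℕ))
  · subst hsource
    simp only [gridSupply, if_true, Ne.symm hm, if_false] at h ⊢
    linarith
  · simp only [gridSupply, hsource, if_false] at h ⊢
    split_ifs at h ⊢ <;> linarith

end Grid

theorem stmt9_general (m N : ℕ) (hm : 2 ≤ m) (hN : 2 ≤ N)
    (x : ℕ → ℝ) (hx01 : ∀ j ∈ Finset.Icc 1 N, 0 ≤ x j ∧ x j ≤ 1)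
    (f : (ℕ × ℕ) × (ℕ × ℕ) → ℝ)
    (hf01 : ∀ a ∈ gridA m N, 0 ≤ f a ∧ f a ≤ 1)
    (hflow : ∀ v ∈ gridV m N,
      (∑ a ∈ (gridA m N).filter (fun a => a.1 = v), f a) -
        (∑ a ∈ (gridA m N).filter (fun a => a.2 = v), f a) =
      if v = ((1 : ℕ), (1 : ℕ)) then 1 else if v.1 = m then -(x v.2) else 0)
    (y : ℕ × ℕ → ℝ)
    (hy : ∀ v ∈ gridV m N, y v =
      (∑ a ∈ (gridA m N).filter (fun a => a.1 = v), f a) +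
        (if v.1 = m then x v.2 else 0)) :
    y ((1 : ℕ), (1 : ℕ)) = 1 ∧
    (∀ v ∈ gridV m N, 0 ≤ y v ∧ y v ≤ 1) ∧
    (∀ u ∈ gridV m N, u.1 ≠ m →
      y u ≤ ∑ a ∈ (gridA m N).filter (fun a => a.1 = u), y a.2) ∧
    (∀ u ∈ gridV m N, u.1 = m →
      y u ≤ (∑ a ∈ (gridA m N).filter (fun a => a.1 = u), y a.2) + x u.2) := by
  have hf (a) (ha : a ∈ gridA m N) : 0 ≤ f a := (hf01 a ha).1
  have hy_in (v) (hv : v ∈ gridV m N) :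
      y v = inFlow (gridA m N) f v + if v = ((1 : ℕ), (1 : ℕ)) then 1 else 0 :=
    (hy v hv).trans (outFlow_add_sink_eq_inFlow_add_source (by omega) hflow hv)
  have hout (u : ℕ × ℕ) :
      outFlow (gridA m N) f u ≤ ∑ a ∈ (gridA m N).filter (fun a => a.1 = u), y a.2 := by
    refine Finset.sum_le_sum fun a ha => ?_
    have haA := (Finset.mem_filter.1 ha).1
    rw [hy_in a.2 (mem_gridA.1 haA).1.2]
    have := le_inFlow hf haA
    split_ifs <;> linarith
  refine ⟨?_, fun v hv => ?_, fun u hu hum => ?_, fun u hu hum => ?_⟩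
  · rw [hy_in _ (one_one_mem_gridV (by omega) (by omega)), inFlow_gridA_one_one, if_pos rfl,
      zero_add]
  · have h0 := inFlow_nonneg hf v
    have h1 := inFlow_gridA_le_one (fun j hj => (hx01 j hj).1) hf hflow v
    rw [hy_in v hv]
    split_ifs with h
    · subst h
      rw [inFlow_gridA_one_one]
      norm_num
    · exact ⟨by linarith, by linarith⟩
  · rw [hy u hu, if_neg hum, add_zero]
    exact hout u
  · rw [hy u hu, if_pos hum]
    exact add_le_add (hout u) le_rfl

theorem stmt9 (m N : ℕ) (hm : 2 ≤ m) (hN : 2 ≤ N)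
    (x : ℕ → ℝ) (hx01 : ∀ j ∈ Finset.Icc 1 N, 0 ≤ x j ∧ x j ≤ 1)
    (hxsum : ∑ j ∈ Finset.Icc 1 N, x j = 1)
    (f : (ℕ × ℕ) × (ℕ × ℕ) → ℝ)
    (hf01 : ∀ a ∈ gridA m N, 0 ≤ f a ∧ f a ≤ 1)
    (hflow : ∀ v ∈ gridV m N,
      (∑ a ∈ (gridA m N).filter (fun a => a.1 = v), f a) -
        (∑ a ∈ (gridA m N).filter (fun a => a.2 = v), f a) =
      if v = ((1 : ℕ), (1 : ℕ)) then 1 else if v.1 = m then -(x v.2) else 0)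
    (y : ℕ × ℕ → ℝ)
    (hy : ∀ v ∈ gridV m N, y v =
      (∑ a ∈ (gridA m N).filter (fun a => a.1 = v), f a) +
        (if v.1 = m then x v.2 else 0)) :
    y ((1 : ℕ), (1 : ℕ)) = 1 ∧
    (∀ v ∈ gridV m N, 0 ≤ y v ∧ y v ≤ 1) ∧
    (∀ u ∈ gridV m N, u.1 ≠ m →
      y u ≤ ∑ a ∈ (gridA m N).filter (fun a => a.1 = u), y a.2) ∧
    (∀ u ∈ gridV m N, u.1 = m →
      y u ≤ (∑ a ∈ (gridA m N).filter (fun a => a.1 = u), y a.2) + x u.2) :=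
  stmt9_general m N hm hN x hx01 f hf01 hflow y hy
end

section
/- Let s^1,…,s^k be time series with s^l ∈ ℝ^{m_l} and m_l ≥ 2 for all l. Then there exists a time series z of length at most ∑_{l=1}^k m_l − 2(k−1) that is a mean of s^1,…,s^k, i.e., F(z) ≤ F(z') for every time series z' of any length. -/
attribute [local instance] Classical.propDecidable

namespace WarpingPath

variable {m n : ℕ} (P : WarpingPath m n)

lemma step' {t : ℕ} (h : t + 1 < P.len) :
    ((P.pt (t+1)).1 = (P.pt t).1 + 1 ∧ (P.pt (t+1)).2 = (P.pt t).2) ∨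
    ((P.pt (t+1)).1 = (P.pt t).1 ∧ (P.pt (t+1)).2 = (P.pt t).2 + 1) ∨
    ((P.pt (t+1)).1 = (P.pt t).1 + 1 ∧ (P.pt (t+1)).2 = (P.pt t).2 + 1) := by
  rcases P.step t h with h' | h' | h'
  · exact Or.inl ⟨by rw [h'], by rw [h']⟩
  · exact Or.inr (Or.inl ⟨by rw [h'], by rw [h']⟩)
  · exact Or.inr (Or.inr ⟨by rw [h'], by rw [h']⟩)

lemma fst_succ_le {t : ℕ} (h : t + 1 < P.len) :
    (P.pt t).1 ≤ (P.pt (t+1)).1 ∧ (P.pt (t+1)).1 ≤ (P.pt t).1 + 1 := by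
  rcases P.step' h with ⟨h1, _⟩ | ⟨h1, _⟩ | ⟨h1, _⟩ <;> omega

lemma snd_succ_le {t : ℕ} (h : t + 1 < P.len) :
    (P.pt t).2 ≤ (P.pt (t+1)).2 ∧ (P.pt (t+1)).2 ≤ (P.pt t).2 + 1 := by
  rcases P.step' h with ⟨_, h2⟩ | ⟨_, h2⟩ | ⟨_, h2⟩ <;> omega

lemma mono_fst : ∀ {a b : ℕ}, a ≤ b → b < P.len → (P.pt a).1 ≤ (P.pt b).1 := by
  intro a b hab hb
  induction b with
  | zero =>
    have ha : a = 0 := by omega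
    subst ha; exact le_refl _
  | succ b ih =>
    rcases Nat.lt_or_ge a (b+1) with h | h
    · have h1 := ih (by omega) (by omega)
      have := P.fst_succ_le hb
      omega
    · have : a = b + 1 := by omega
      subst this; rfl

lemma mono_snd : ∀ {a b : ℕ}, a ≤ b → b < P.len → (P.pt a).2 ≤ (P.pt b).2 := by
  intro a b hab hb
  induction b with
  | zero =>
    have ha : a = 0 := by omega
    subst ha; exact le_refl _
  | succ b ih =>
    rcases Nat.lt_or_ge a (b+1) with h | h
    · have h1 := ih (by omega) (by omega)
      have := P.snd_succ_le hb
      omega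
    · have : a = b + 1 := by omega
      subst this; rfl

lemma pt_bounds {t : ℕ} (h : t < P.len) :
    1 ≤ (P.pt t).1 ∧ (P.pt t).1 ≤ m ∧ 1 ≤ (P.pt t).2 ∧ (P.pt t).2 ≤ n := by
  have h0 : (P.pt 0).1 = 1 ∧ (P.pt 0).2 = 1 := by rw [P.first]; exact ⟨rfl, rfl⟩
  have hl : (P.pt (P.len - 1)).1 = m ∧ (P.pt (P.len - 1)).2 = n := by
    rw [P.last]; exact ⟨rfl, rfl⟩
  have h1 := P.mono_fst (Nat.zero_le t) h
  have h2 := P.mono_fst (show t ≤ P.len - 1 by omega) (by have := P.len_pos; omega)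
  have h3 := P.mono_snd (Nat.zero_le t) h
  have h4 := P.mono_snd (show t ≤ P.len - 1 by omega) (by have := P.len_pos; omega)
  omega

lemma order_pos (P : WarpingPath m n) : 1 ≤ m ∧ 1 ≤ n := by
  have := P.pt_bounds (show P.len - 1 < P.len by have := P.len_pos; omega)
  rw [P.last] at this
  exact ⟨this.1, this.2.2.1⟩

/-- there is a step crossing row boundary `b → b+1` -/
lemma cross {b : ℕ} (hb1 : 1 ≤ b) (hb2 : b + 1 ≤ m) :
    ∃ t, t + 1 < P.len ∧ (P.pt t).1 = b ∧ (P.pt (t+1)).1 = b + 1 := by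
  have key : ∀ t, t < P.len → b + 1 ≤ (P.pt t).1 →
      ∃ u, u + 1 < P.len ∧ (P.pt u).1 = b ∧ (P.pt (u+1)).1 = b + 1 := by
    intro t
    induction t with
    | zero => intro _ h; rw [P.first] at h; exact absurd h (by simp; omega)
    | succ t ih =>
      intro ht h
      rcases Nat.lt_or_ge (P.pt t).1 (b+1) with h' | h'
      · have := P.fst_succ_le ht
        exact ⟨t, ht, by omega, by omega⟩
      · exact ih (by omega) h'
  have := P.len_pos
  apply key (P.len - 1) (by omega)
  rw [P.last]; exact hb2

lemma visit_row {i : ℕ} (hi1 : 1 ≤ i) (hi2 : i ≤ m) :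
    ∃ t, t < P.len ∧ (P.pt t).1 = i := by
  rcases Nat.eq_or_lt_of_le hi1 with h | h
  · exact ⟨0, P.len_pos, by rw [P.first]; omega⟩
  · obtain ⟨t, ht, _, h2⟩ := P.cross (b := i - 1) (by omega) (by omega)
    exact ⟨t + 1, ht, by omega⟩

end WarpingPath


namespace WarpingPath

variable {m n : ℕ} (P : WarpingPath m n)

/-- step `t` is a vertical step -/
def isV (t : ℕ) : Prop := (P.pt (t+1)).1 = (P.pt t).1 + 1 ∧ (P.pt (t+1)).2 = (P.pt t).2
/-- step `t` is a horizontal step -/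
def isH (t : ℕ) : Prop := (P.pt (t+1)).1 = (P.pt t).1 ∧ (P.pt (t+1)).2 = (P.pt t).2 + 1
/-- step `t` is a diagonal step -/
def isD (t : ℕ) : Prop := (P.pt (t+1)).1 = (P.pt t).1 + 1 ∧ (P.pt (t+1)).2 = (P.pt t).2 + 1

noncomputable def Hsteps : Finset ℕ := (Finset.range (P.len - 1)).filter P.isH
noncomputable def Dsteps : Finset ℕ := (Finset.range (P.len - 1)).filter P.isD

lemma snd_count : ∀ t, t < P.len →
    (P.pt t).2 = 1 + ((Finset.range t).filter
      (fun u => (P.pt (u+1)).2 = (P.pt u).2 + 1)).card := by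
  intro t
  induction t with
  | zero => intro _; simp [P.first]
  | succ t ih =>
    intro ht
    have ht' : t + 1 < P.len := ht
    rw [Finset.range_add_one, Finset.filter_insert]
    by_cases h : (P.pt (t+1)).2 = (P.pt t).2 + 1
    · rw [if_pos h, Finset.card_insert_of_notMem (by simp)]
      rw [h, ih (by omega)]; ring
    · rw [if_neg h]
      have : (P.pt (t+1)).2 = (P.pt t).2 := by
        rcases P.step' ht' with ⟨_, h2⟩ | ⟨_, h2⟩ | ⟨_, h2⟩ <;> omega
      rw [this, ih (by omega)]

lemma Hsteps_card_add_Dsteps_card : P.Hsteps.card + P.Dsteps.card = n - 1 := by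
  have hn := P.snd_count (P.len - 1) (by have := P.len_pos; omega)
  rw [P.last] at hn
  have hsplit : (Finset.range (P.len - 1)).filter
      (fun u => (P.pt (u+1)).2 = (P.pt u).2 + 1) = P.Hsteps ∪ P.Dsteps := by
    ext u
    simp only [Hsteps, Dsteps, Finset.mem_union, Finset.mem_filter, Finset.mem_range, isH, isD]
    constructor
    · rintro ⟨hu, h2⟩
      rcases P.step' (show u + 1 < P.len by omega) with ⟨h1, _⟩ | ⟨h1, _⟩ | ⟨h1, _⟩
      · exact Or.inr ⟨hu, h1, h2⟩
      · exact Or.inl ⟨hu, h1, h2⟩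
      · exact Or.inr ⟨hu, h1, h2⟩
    · rintro (⟨hu, _, h2⟩ | ⟨hu, _, h2⟩) <;> exact ⟨hu, h2⟩
  have hdisj : Disjoint P.Hsteps P.Dsteps := by
    rw [Finset.disjoint_left]
    intro u hu hu'
    simp only [Hsteps, Dsteps, Finset.mem_filter, isH, isD] at hu hu'
    omega
  rw [hsplit, Finset.card_union_of_disjoint hdisj] at hn
  simp at hn
  omega

lemma fst_count : ∀ t, t < P.len →
    (P.pt t).1 = 1 + ((Finset.range t).filter
      (fun u => (P.pt (u+1)).1 = (P.pt u).1 + 1)).card := by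
  intro t
  induction t with
  | zero => intro _; simp [P.first]
  | succ t ih =>
    intro ht
    have ht' : t + 1 < P.len := ht
    rw [Finset.range_add_one, Finset.filter_insert]
    by_cases h : (P.pt (t+1)).1 = (P.pt t).1 + 1
    · rw [if_pos h, Finset.card_insert_of_notMem (by simp)]
      rw [h, ih (by omega)]; ring
    · rw [if_neg h]
      have : (P.pt (t+1)).1 = (P.pt t).1 := by
        rcases P.step' ht' with ⟨h1, _⟩ | ⟨h1, _⟩ | ⟨h1, _⟩ <;> omega
      rw [this, ih (by omega)]

end WarpingPath


namespace WarpingPath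

variable {m n : ℕ} (P : WarpingPath m n)

/-- reduction B applies: a vertical step adjacent to a horizontal step -/
def Bappl : Prop := ∃ t, t + 2 < P.len ∧ ((P.isV t ∧ P.isH (t+1)) ∨ (P.isH t ∧ P.isV (t+1)))

/-- row `i₀` can be deleted from this path -/
def Del (i₀ : ℕ) : Prop := ∃ t, 0 < t ∧ t + 1 < P.len ∧ (P.pt t).1 = i₀ ∧
  (P.pt (t-1)).1 = i₀ - 1 ∧ (P.pt (t+1)).1 = i₀ + 1 ∧ (P.pt (t+1)).2 ≤ (P.pt (t-1)).2 + 1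

lemma exists_adj_diff (Q : ℕ → Prop) : ∀ b a, a ≤ b → (Q a ∧ ¬ Q b) ∨ (¬ Q a ∧ Q b) →
    ∃ t, a ≤ t ∧ t < b ∧ ((Q t ∧ ¬ Q (t+1)) ∨ (¬ Q t ∧ Q (t+1))) := by
  intro b
  induction b with
  | zero =>
    intro a ha h
    interval_cases a
    rcases h with ⟨h1, h2⟩ | ⟨h1, h2⟩
    · exact absurd h1 h2
    · exact absurd h2 h1
  | succ b ih =>
    intro a ha h
    rcases Nat.eq_or_lt_of_le ha with rfl | ha'
    · rcases h with ⟨h1, h2⟩ | ⟨h1, h2⟩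
      · exact absurd h1 h2
      · exact absurd h2 h1
    · by_cases hQb : Q b
      · rcases h with ⟨h1, h2⟩ | ⟨h1, h2⟩
        · exact ⟨b, by omega, by omega, Or.inl ⟨hQb, h2⟩⟩
        · obtain ⟨t, h3, h4, h5⟩ := ih a (by omega) (Or.inr ⟨h1, hQb⟩)
          exact ⟨t, h3, by omega, h5⟩
      · rcases h with ⟨h1, h2⟩ | ⟨h1, h2⟩
        · obtain ⟨t, h3, h4, h5⟩ := ih a (by omega) (Or.inl ⟨h1, hQb⟩)
          exact ⟨t, h3, by omega, h5⟩
        · exact ⟨b, by omega, by omega, Or.inr ⟨hQb, h2⟩⟩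

lemma VHD {t : ℕ} (h : t + 1 < P.len) : P.isV t ∨ P.isH t ∨ P.isD t := P.step' h

lemma Dsteps_nonempty (hB : ¬ P.Bappl) (hm : 2 ≤ m) (hn : 2 ≤ n) : P.Dsteps.Nonempty := by
  by_contra hD
  rw [Finset.not_nonempty_iff_eq_empty] at hD
  have hnoD : ∀ t, t + 1 < P.len → ¬ P.isD t := by
    intro t ht hd
    have : t ∈ P.Dsteps := by
      simp only [Dsteps, Finset.mem_filter, Finset.mem_range]
      exact ⟨by omega, hd⟩
    rw [hD] at this; exact absurd this (Finset.notMem_empty t)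
  -- there is a horizontal step
  have hH : ∃ t, t + 1 < P.len ∧ P.isH t := by
    have := P.Hsteps_card_add_Dsteps_card
    rw [hD] at this
    simp at this
    have hne : P.Hsteps.Nonempty := by
      rw [← Finset.card_pos]; omega
    obtain ⟨t, ht⟩ := hne
    simp only [Hsteps, Finset.mem_filter, Finset.mem_range] at ht
    exact ⟨t, by omega, ht.2⟩
  -- there is a vertical step
  have hV : ∃ t, t + 1 < P.len ∧ P.isV t := by
    obtain ⟨t, ht, h1, h2⟩ := P.cross (b := 1) le_rfl hm
    rcases P.VHD ht with h | h | h
    · exact ⟨t, ht, h⟩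
    · exact absurd h (by simp [isH]; omega)
    · exact absurd h (hnoD t ht)
  obtain ⟨t1, ht1, hV1⟩ := hV
  obtain ⟨t2, ht2, hH2⟩ := hH
  have hVH : ∀ u, P.isV u → ¬ P.isH u := by
    rintro u ⟨a1, a2⟩ ⟨b1, b2⟩; omega
  have key : ∃ t, t + 2 < P.len ∧ ((P.isV t ∧ ¬ P.isV (t+1)) ∨ (¬ P.isV t ∧ P.isV (t+1))) := by
    rcases le_or_gt t1 t2 with hle | hlt
    · obtain ⟨t, h3, h4, h5⟩ := exists_adj_diff P.isV t2 t1 hle (Or.inl ⟨hV1, fun hv => hVH t2 hv hH2⟩)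
      exact ⟨t, by omega, h5⟩
    · obtain ⟨t, h3, h4, h5⟩ := exists_adj_diff P.isV t1 t2 (by omega)
        (Or.inr ⟨(fun hv => hVH t2 hv hH2), hV1⟩)
      exact ⟨t, by omega, h5⟩
  obtain ⟨t, ht, hcase⟩ := key
  apply hB
  refine ⟨t, ht, ?_⟩
  have s1 : P.isV t ∨ P.isH t := by
    rcases P.VHD (show t + 1 < P.len by omega) with h | h | h
    · exact Or.inl h
    · exact Or.inr h
    · exact absurd h (hnoD t (by omega))
  have s2 : P.isV (t+1) ∨ P.isH (t+1) := by
    rcases P.VHD (show t + 2 < P.len by omega) with h | h | h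
    · exact Or.inl h
    · exact Or.inr h
    · exact absurd h (hnoD (t+1) (by omega))
  rcases hcase with ⟨c1, c2⟩ | ⟨c1, c2⟩
  · rcases s2 with h | h
    · exact absurd h c2
    · exact Or.inl ⟨c1, h⟩
  · rcases s1 with h | h
    · exact absurd h c1
    · exact Or.inr ⟨h, c2⟩

end WarpingPath

namespace WarpingPath

lemma not_del {m n : ℕ} (P : WarpingPath m n) {i₀ : ℕ} (h2 : 2 ≤ i₀) (hL : i₀ < m)
    (hnd : ¬ P.Del i₀) :
    (∃ t, t + 1 < P.len ∧ P.isH t ∧ (P.pt t).1 = i₀) ∨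
    ((∃ t, t + 1 < P.len ∧ P.isD t ∧ (P.pt t).1 = i₀ - 1) ∧
     (∃ t, t + 1 < P.len ∧ P.isD t ∧ (P.pt t).1 = i₀)) := by
  obtain ⟨t, ht, hti⟩ := P.visit_row (show 1 ≤ i₀ by omega) (le_of_lt hL)
  by_cases hdup : ∃ u, u + 1 < P.len ∧ (P.pt u).1 = i₀ ∧ (P.pt (u+1)).1 = i₀
  · obtain ⟨u, hu, hu1, hu2⟩ := hdup
    left
    refine ⟨u, hu, ?_, hu1⟩
    rcases P.step' hu with ⟨a, b⟩ | ⟨a, b⟩ | ⟨a, b⟩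
    · omega
    · exact ⟨a, b⟩
    · omega
  · push_neg at hdup
    have ht0 : 0 < t := by
      rcases Nat.eq_zero_or_pos t with rfl | h
      · rw [P.first] at hti; simp at hti; omega
      · exact h
    have htlast : t + 1 < P.len := by
      rcases Nat.lt_or_ge (t+1) P.len with h | h
      · exact h
      · exfalso
        have : t = P.len - 1 := by omega
        rw [this, P.last] at hti
        simp at hti; omega
    have hstep_prev : t - 1 + 1 = t := by omega
    have hprev_lt : (t - 1) + 1 < P.len := by omega
    have hprev : (P.pt (t-1)).1 = i₀ - 1 := by
      have h1 := P.fst_succ_le hprev_lt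
      rw [hstep_prev] at h1
      rcases Nat.eq_or_lt_of_le h1.1 with heq | hlt
      · exfalso
        exact hdup (t-1) hprev_lt (by omega) (by rw [hstep_prev]; exact hti)
      · omega
    have hnext : (P.pt (t+1)).1 = i₀ + 1 := by
      have h1 := P.fst_succ_le htlast
      rcases Nat.eq_or_lt_of_le h1.1 with heq | hlt
      · exfalso
        exact hdup t htlast hti (by omega)
      · omega
    have hsnd : (P.pt (t-1)).2 + 2 ≤ (P.pt (t+1)).2 := by
      by_contra hc
      exact hnd ⟨t, ht0, htlast, hti, hprev, hnext, by omega⟩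
    have hs1 := P.snd_succ_le hprev_lt
    rw [hstep_prev] at hs1
    have hs2 := P.snd_succ_le htlast
    right
    constructor
    · refine ⟨t - 1, hprev_lt, ?_, hprev⟩
      constructor
      · rw [hstep_prev]; omega
      · rw [hstep_prev]; omega
    · refine ⟨t, htlast, ?_, hti⟩
      exact ⟨by omega, by omega⟩

lemma card_rowsH {m n : ℕ} (P : WarpingPath m n) :
    ((Finset.Ico 2 m).filter
      (fun i => ∃ t, t + 1 < P.len ∧ P.isH t ∧ (P.pt t).1 = i)).card ≤ P.Hsteps.card := by
  apply Finset.card_le_card_of_injOn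
    (fun i => if h : ∃ t, t + 1 < P.len ∧ P.isH t ∧ (P.pt t).1 = i then h.choose else 0)
  · intro i hi
    simp only [Finset.mem_coe, Finset.mem_filter] at hi ⊢
    rw [dif_pos hi.2]
    have hspec := hi.2.choose_spec
    simp only [Hsteps, Finset.mem_filter, Finset.mem_range]
    exact ⟨by omega, hspec.2.1⟩
  · intro i hi j hj hij
    simp only [Finset.mem_coe, Finset.mem_filter] at hi hj
    simp only [dif_pos hi.2, dif_pos hj.2] at hij
    have h1 := hi.2.choose_spec.2.2
    have h2 := hj.2.choose_spec.2.2
    rw [hij] at h1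
    omega

lemma card_rowsDD {m n : ℕ} (P : WarpingPath m n) :
    ((Finset.Ico 2 m).filter
      (fun i => (∃ t, t + 1 < P.len ∧ P.isD t ∧ (P.pt t).1 = i - 1) ∧
                (∃ t, t + 1 < P.len ∧ P.isD t ∧ (P.pt t).1 = i))).card
      ≤ P.Dsteps.card - 1 := by
  set F := (Finset.Ico 2 m).filter
      (fun i => (∃ t, t + 1 < P.len ∧ P.isD t ∧ (P.pt t).1 = i - 1) ∧
                (∃ t, t + 1 < P.len ∧ P.isD t ∧ (P.pt t).1 = i)) with hF
  rcases Finset.eq_empty_or_nonempty F with he | hne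
  · rw [he]; simp
  · set istar := F.min' hne with histar
    have histar_mem : istar ∈ F := F.min'_mem hne
    simp only [hF, Finset.mem_filter, Finset.mem_Ico] at histar_mem
    obtain ⟨⟨hi2, _⟩, ⟨tstar, hts, htsD, htsr⟩, _⟩ := histar_mem
    have htstar_mem : tstar ∈ P.Dsteps := by
      simp only [Dsteps, Finset.mem_filter, Finset.mem_range]
      exact ⟨by omega, htsD⟩
    have : F.card ≤ (P.Dsteps.erase tstar).card := by
      apply Finset.card_le_card_of_injOn
        (fun i => if h : ∃ t, t + 1 < P.len ∧ P.isD t ∧ (P.pt t).1 = i then h.choose else 0)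
      · intro i hi
        have hmin := F.min'_le i hi
        simp only [hF, Finset.mem_coe, Finset.mem_filter, Finset.mem_Ico] at hi ⊢
        rw [dif_pos hi.2.2]
        have hspec := hi.2.2.choose_spec
        rw [Finset.mem_erase]
        constructor
        · intro hc
          rw [hc] at hspec
          omega
        · simp only [Dsteps, Finset.mem_filter, Finset.mem_range]
          exact ⟨by omega, hspec.2.1⟩
      · intro i hi j hj hij
        simp only [Finset.mem_coe, hF, Finset.mem_filter] at hi hj
        simp only [dif_pos hi.2.2, dif_pos hj.2.2] at hij
        have h1 := hi.2.2.choose_spec.2.2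
        have h2 := hj.2.2.choose_spec.2.2
        rw [hij] at h1
        omega
    have := Finset.card_erase_of_mem htstar_mem
    omega

end WarpingPath

lemma count_bound {k L : ℕ} (m : Fin k → ℕ) (hm : ∀ l, 2 ≤ m l) (hL : 2 ≤ L)
    (P : ∀ l, WarpingPath L (m l)) (hB : ∀ l, ¬ (P l).Bappl)
    (hC : ∀ i, 2 ≤ i → i < L → ∃ l, ¬ (P l).Del i) :
    L + 2 * k ≤ (∑ l, m l) + 2 := by
  classical
  set rows := fun (l : Fin k) => (Finset.Ico 2 L).filter
    (fun i => (∃ t, t + 1 < (P l).len ∧ (P l).isH t ∧ ((P l).pt t).1 = i) ∨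
      ((∃ t, t + 1 < (P l).len ∧ (P l).isD t ∧ ((P l).pt t).1 = i - 1) ∧
       (∃ t, t + 1 < (P l).len ∧ (P l).isD t ∧ ((P l).pt t).1 = i))) with hrows
  have hsub : Finset.Ico 2 L ⊆ Finset.univ.biUnion rows := by
    intro i hi
    rw [Finset.mem_Ico] at hi
    obtain ⟨l, hl⟩ := hC i hi.1 hi.2
    rw [Finset.mem_biUnion]
    refine ⟨l, Finset.mem_univ l, ?_⟩
    rw [hrows, Finset.mem_filter, Finset.mem_Ico]
    exact ⟨hi, (P l).not_del hi.1 hi.2 hl⟩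
  have hcard : (Finset.Ico 2 L).card ≤ ∑ l, (rows l).card :=
    le_trans (Finset.card_le_card hsub) (Finset.card_biUnion_le)
  have hper : ∀ l, (rows l).card ≤ m l - 2 := by
    intro l
    have hsplit : rows l ⊆ ((Finset.Ico 2 L).filter
        (fun i => ∃ t, t + 1 < (P l).len ∧ (P l).isH t ∧ ((P l).pt t).1 = i)) ∪
        ((Finset.Ico 2 L).filter
        (fun i => (∃ t, t + 1 < (P l).len ∧ (P l).isD t ∧ ((P l).pt t).1 = i - 1) ∧
         (∃ t, t + 1 < (P l).len ∧ (P l).isD t ∧ ((P l).pt t).1 = i))) := by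
      rw [hrows, ← Finset.filter_or]
    have h1 := (P l).card_rowsH
    have h2 := (P l).card_rowsDD
    have h3 := (P l).Hsteps_card_add_Dsteps_card
    have h4 : (P l).Dsteps.Nonempty := (P l).Dsteps_nonempty (hB l) hL (hm l)
    have h5 : 1 ≤ (P l).Dsteps.card := Finset.card_pos.mpr h4
    have := le_trans (Finset.card_le_card hsplit) (Finset.card_union_le _ _)
    omega
  have htot : (Finset.Ico 2 L).card ≤ ∑ l, (m l - 2) :=
    le_trans hcard (Finset.sum_le_sum (fun l _ => hper l))
  have hIco : (Finset.Ico 2 L).card = L - 2 := by rw [Nat.card_Ico]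
  have hsum : ∑ l, (m l - 2) + 2 * k = ∑ l, m l := by
    have : ∑ l, m l = ∑ l : Fin k, (m l - 2 + 2) :=
      Finset.sum_congr rfl (fun l _ => by have := hm l; omega)
    rw [this, Finset.sum_add_distrib]
    simp [Finset.card_univ, mul_comm]
  omega


namespace WarpingPath

variable {m n : ℕ}

lemma mem_V {P : WarpingPath m n} {v : ℕ × ℕ} : v ∈ P.V ↔ ∃ u, u < P.len ∧ P.pt u = v := by
  simp [V, Finset.mem_image, Finset.mem_range]

lemma cost_nonneg_s12 (P : WarpingPath m n) (s s' : ℕ → ℝ) : 0 ≤ P.cost s s' :=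
  Finset.sum_nonneg (fun v _ => sq_nonneg _)

lemma cost_le_of_subset {P Q : WarpingPath m n} (h : P.V ⊆ Q.V) (s s' : ℕ → ℝ) :
    P.cost s s' ≤ Q.cost s s' :=
  Finset.sum_le_sum_of_subset_of_nonneg h (fun v _ _ => sq_nonneg _)

lemma reduceB (P : WarpingPath m n) (h : P.Bappl) :
    ∃ P' : WarpingPath m n, P'.len < P.len ∧ P'.V ⊆ P.V := by
  obtain ⟨t₀, ht, hpat⟩ := h
  have hD : (P.pt (t₀+1+1)).1 = (P.pt t₀).1 + 1 ∧ (P.pt (t₀+1+1)).2 = (P.pt t₀).2 + 1 := by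
    rcases hpat with ⟨⟨a1, a2⟩, ⟨b1, b2⟩⟩ | ⟨⟨a1, a2⟩, ⟨b1, b2⟩⟩ <;>
      exact ⟨by omega, by omega⟩
  have hlen3 : 3 ≤ P.len := by omega
  refine ⟨⟨P.len - 1, by omega, fun t => if t ≤ t₀ then P.pt t else P.pt (t+1),
    ?_, ?_, ?_⟩, show P.len - 1 < P.len by omega, ?_⟩
  · simp [P.first]
  · beta_reduce
    have h1 : ¬ (P.len - 1 - 1 ≤ t₀) := by omega
    rw [if_neg h1]
    have : P.len - 1 - 1 + 1 = P.len - 1 := by omega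
    rw [this, P.last]
  · intro t htl
    beta_reduce
    rcases Nat.lt_trichotomy t t₀ with hc | hc | hc
    · rw [if_pos (by omega : t ≤ t₀), if_pos (by omega : t + 1 ≤ t₀)]
      exact P.step t (by omega)
    · rw [if_pos (by omega : t ≤ t₀), if_neg (by omega : ¬ t + 1 ≤ t₀)]
      have h2 : t + 1 + 1 = t₀ + 1 + 1 := by omega
      have h3 : t = t₀ := by omega
      rw [h2, h3]
      right; right
      exact Prod.ext hD.1 hD.2
    · rw [if_neg (by omega : ¬ t ≤ t₀), if_neg (by omega : ¬ t + 1 ≤ t₀)]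
      exact P.step (t+1) (by omega)
  · intro v hv
    rw [mem_V] at hv ⊢
    obtain ⟨u, hu, hv⟩ := hv
    have hu' : u < P.len - 1 := hu
    simp only at hv
    by_cases hc : u ≤ t₀
    · rw [if_pos hc] at hv
      exact ⟨u, by omega, hv⟩
    · rw [if_neg hc] at hv
      exact ⟨u + 1, by omega, hv⟩


lemma reduceC (P : WarpingPath m n) {i₀ : ℕ} (h2 : 2 ≤ i₀) (hL : i₀ < m) (hd : P.Del i₀) :
    ∃ P' : WarpingPath (m-1) n, P'.len < P.len ∧
      P'.V ⊆ (P.V.filter (fun v => v.1 ≠ i₀)).image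
        (fun v => (if v.1 < i₀ then v.1 else v.1 - 1, v.2)) := by
  classical
  obtain ⟨t₀, ht0, htl, hti, hprev, hnext, hsnd⟩ := hd
  have hmono := P.mono_snd (show t₀ - 1 ≤ t₀ + 1 by omega) htl
  set ρ : ℕ × ℕ → ℕ × ℕ := fun v => (if v.1 < i₀ then v.1 else v.1 - 1, v.2) with hρ
  have hrow_lt : ∀ u, u < t₀ → (P.pt u).1 < i₀ := by
    intro u hu
    have h1 : (P.pt u).1 ≤ (P.pt (t₀ - 1)).1 :=
      P.mono_fst (by omega) (by omega)
    omega
  have hrow_gt : ∀ u, t₀ < u → u < P.len → i₀ < (P.pt u).1 := by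
    intro u hu hu'
    have h1 : (P.pt (t₀ + 1)).1 ≤ (P.pt u).1 := P.mono_fst (by omega) hu'
    omega
  refine ⟨⟨P.len - 1, by omega,
    fun t => if t < t₀ then P.pt t else ((P.pt (t+1)).1 - 1, (P.pt (t+1)).2),
    ?_, ?_, ?_⟩, show P.len - 1 < P.len by omega, ?_⟩
  · simp only [if_pos ht0, P.first]
  · beta_reduce
    have h1 : ¬ (P.len - 1 - 1 < t₀) := by omega
    rw [if_neg h1]
    have h3 : P.len - 1 - 1 + 1 = P.len - 1 := by omega
    rw [h3, P.last]
  · intro t htlt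
    beta_reduce
    rcases Nat.lt_trichotomy (t+1) t₀ with hc | hc | hc
    · rw [if_pos (by omega : t < t₀), if_pos hc]
      exact P.step t (by omega)
    · rw [if_pos (by omega : t < t₀), if_neg (by omega : ¬ t + 1 < t₀)]
      have h4 : t + 1 + 1 = t₀ + 1 := by omega
      have h3 : t = t₀ - 1 := by omega
      rw [h4, h3]
      by_cases hcc : (P.pt (t₀+1)).2 = (P.pt (t₀-1)).2
      · left
        simp only [Prod.mk.injEq]
        omega
      · right; right
        simp only [Prod.mk.injEq]
        omega
    · rw [if_neg (by omega : ¬ t < t₀), if_neg (by omega : ¬ t + 1 < t₀)]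
      have hA : i₀ < (P.pt (t+1)).1 := hrow_gt (t+1) (by omega) (by omega)
      rcases P.step' (show t + 1 + 1 < P.len by omega) with ⟨a1, a2⟩ | ⟨a1, a2⟩ | ⟨a1, a2⟩
      · left; simp only [Prod.mk.injEq]; omega
      · right; left; simp only [Prod.mk.injEq]; omega
      · right; right; simp only [Prod.mk.injEq]; omega
  · intro v hv
    rw [mem_V] at hv
    obtain ⟨u, hu, hv⟩ := hv
    have hu' : u < P.len - 1 := hu
    simp only at hv
    rw [Finset.mem_image]
    by_cases hc : u < t₀
    · rw [if_pos hc] at hv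
      have hr : (P.pt u).1 < i₀ := hrow_lt u hc
      refine ⟨P.pt u, ?_, ?_⟩
      · rw [Finset.mem_filter, mem_V]
        exact ⟨⟨u, by omega, rfl⟩, by omega⟩
      · rw [← hv]
        show ((if (P.pt u).1 < i₀ then (P.pt u).1 else (P.pt u).1 - 1), (P.pt u).2) = P.pt u
        rw [if_pos hr]
    · rw [if_neg hc] at hv
      have hr : i₀ < (P.pt (u+1)).1 := hrow_gt (u+1) (by omega) (by omega)
      refine ⟨P.pt (u+1), ?_, ?_⟩
      · rw [Finset.mem_filter, mem_V]
        exact ⟨⟨u+1, by omega, rfl⟩, by omega⟩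
      · rw [← hv]
        show ((if (P.pt (u+1)).1 < i₀ then (P.pt (u+1)).1 else (P.pt (u+1)).1 - 1),
          (P.pt (u+1)).2) = ((P.pt (u+1)).1 - 1, (P.pt (u+1)).2)
        rw [if_neg (by omega : ¬ (P.pt (u+1)).1 < i₀)]

lemma sum_image_le_real {α β : Type*} [DecidableEq β] (t : Finset α) (f : α → β)
    (g : β → ℝ) (h : ∀ v ∈ t, 0 ≤ g (f v)) :
    ∑ w ∈ t.image f, g w ≤ ∑ v ∈ t, g (f v) := by
  classical
  induction t using Finset.induction_on with
  | empty => simp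
  | insert _ _ ha ih =>
    rename_i a tt
    rw [Finset.image_insert, Finset.sum_insert ha]
    by_cases hfa : f a ∈ tt.image f
    · rw [Finset.insert_eq_self.mpr hfa]
      have := ih (fun v hv => h v (Finset.mem_insert_of_mem hv))
      have h0 : 0 ≤ g (f a) := h a (Finset.mem_insert_self a tt)
      linarith
    · rw [Finset.sum_insert hfa]
      have := ih (fun v hv => h v (Finset.mem_insert_of_mem hv))
      linarith

lemma cost_del {m' : ℕ} (P' : WarpingPath m' n) (P : WarpingPath m n) (i₀ : ℕ)
    (h : P'.V ⊆ (P.V.filter (fun v => v.1 ≠ i₀)).image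
      (fun v => (if v.1 < i₀ then v.1 else v.1 - 1, v.2))) (z s' : ℕ → ℝ) :
    P'.cost (fun i => if i < i₀ then z i else z (i+1)) s' ≤ P.cost z s' := by
  classical
  set z'' : ℕ → ℝ := fun i => if i < i₀ then z i else z (i+1) with hz
  set ρ : ℕ × ℕ → ℕ × ℕ := fun v => (if v.1 < i₀ then v.1 else v.1 - 1, v.2) with hρ
  have step1 : P'.cost z'' s' ≤ ∑ w ∈ (P.V.filter (fun v => v.1 ≠ i₀)).image ρ,
      (z'' w.1 - s' w.2) ^ 2 :=
    Finset.sum_le_sum_of_subset_of_nonneg h (fun v _ _ => sq_nonneg _)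
  have step2 : ∑ w ∈ (P.V.filter (fun v => v.1 ≠ i₀)).image ρ, (z'' w.1 - s' w.2) ^ 2 ≤
      ∑ v ∈ P.V.filter (fun v => v.1 ≠ i₀), (z'' (ρ v).1 - s' (ρ v).2) ^ 2 :=
    sum_image_le_real _ ρ (fun w => (z'' w.1 - s' w.2) ^ 2) (fun v _ => sq_nonneg _)
  have step3 : ∑ v ∈ P.V.filter (fun v => v.1 ≠ i₀), (z'' (ρ v).1 - s' (ρ v).2) ^ 2 =
      ∑ v ∈ P.V.filter (fun v => v.1 ≠ i₀), (z v.1 - s' v.2) ^ 2 := by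
    apply Finset.sum_congr rfl
    intro v hv
    rw [Finset.mem_filter] at hv
    have hvv : (ρ v).2 = v.2 := rfl
    have hv1 : z'' (ρ v).1 = z v.1 := by
      show z'' (if v.1 < i₀ then v.1 else v.1 - 1) = z v.1
      by_cases hc : v.1 < i₀
      · rw [if_pos hc, hz]
        simp only
        rw [if_pos hc]
      · rw [if_neg hc, hz]
        simp only
        rw [if_neg (by omega : ¬ v.1 - 1 < i₀)]
        congr 1
        omega
    rw [hvv, hv1]
  have step4 : ∑ v ∈ P.V.filter (fun v => v.1 ≠ i₀), (z v.1 - s' v.2) ^ 2 ≤ P.cost z s' :=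
    Finset.sum_le_sum_of_subset_of_nonneg (Finset.filter_subset _ _) (fun v _ _ => sq_nonneg _)
  calc P'.cost z'' s' ≤ _ := step1
    _ ≤ _ := step2
    _ = _ := step3
    _ ≤ _ := step4


end WarpingPath


open WarpingPath

noncomputable def stdPath (m n : ℕ) (hm : 1 ≤ m) (hn : 1 ≤ n) : WarpingPath m n where
  len := m + n - 1
  len_pos := by omega
  pt := fun t => if t < m then (t + 1, 1) else (m, t + 2 - m)
  first := by
    beta_reduce
    rw [if_pos (by omega : (0:ℕ) < m)]
  last := by
    beta_reduce
    by_cases h : m + n - 1 - 1 < m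
    · rw [if_pos h]
      simp only [Prod.mk.injEq]
      omega
    · rw [if_neg h]
      simp only [Prod.mk.injEq, true_and]
      omega
  step := by
    intro t ht
    beta_reduce
    by_cases h1 : t + 1 < m
    · rw [if_pos h1, if_pos (by omega : t < m)]
      left; rfl
    · rw [if_neg h1]
      by_cases h2 : t < m
      · rw [if_pos h2]
        right; left
        simp only [Prod.mk.injEq]
        omega
      · rw [if_neg h2]
        right; left
        simp only [Prod.mk.injEq, true_and]
        omega

lemma V_subset_box {m n : ℕ} (P : WarpingPath m n) :
    P.V ⊆ Finset.range (m+1) ×ˢ Finset.range (n+1) := by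
  intro v hv
  simp only [WarpingPath.V, Finset.mem_image, Finset.mem_range] at hv
  obtain ⟨u, hu, hv⟩ := hv
  have := P.pt_bounds hu
  rw [Finset.mem_product, Finset.mem_range, Finset.mem_range, ← hv]
  omega

lemma costSet_finite (m n : ℕ) (z s : ℕ → ℝ) :
    {c : ℝ | ∃ P : WarpingPath m n, c = P.cost z s}.Finite := by
  apply Set.Finite.subset (Set.Finite.image
    (fun W : Finset (ℕ × ℕ) => ∑ v ∈ W, (z v.1 - s v.2) ^ 2)
    ((Finset.range (m+1) ×ˢ Finset.range (n+1)).powerset : Finset (Finset (ℕ × ℕ))).finite_toSet)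
  rintro c ⟨P, rfl⟩
  exact ⟨P.V, by simp only [Finset.mem_coe, Finset.mem_powerset]; exact V_subset_box P, rfl⟩

lemma dtw_sq_le {m n : ℕ} (z s : ℕ → ℝ) (P : WarpingPath m n) :
    dtw m n z s ^ 2 ≤ P.cost z s := by
  have hne : {c : ℝ | ∃ P : WarpingPath m n, c = P.cost z s}.Nonempty := ⟨_, P, rfl⟩
  have hbdd : BddBelow {c : ℝ | ∃ P : WarpingPath m n, c = P.cost z s} := by
    refine ⟨0, ?_⟩
    rintro c ⟨Q, rfl⟩
    exact Q.cost_nonneg_s12 z s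
  have h0 : 0 ≤ sInf {c : ℝ | ∃ P : WarpingPath m n, c = P.cost z s} := by
    apply le_csInf hne
    rintro c ⟨Q, rfl⟩
    exact Q.cost_nonneg_s12 z s
  rw [dtw, Real.sq_sqrt h0]
  exact csInf_le hbdd ⟨P, rfl⟩

lemma dtw_attain {m n : ℕ} (hm : 1 ≤ m) (hn : 1 ≤ n) (z s : ℕ → ℝ) :
    ∃ P : WarpingPath m n, dtw m n z s ^ 2 = P.cost z s := by
  have hne : {c : ℝ | ∃ P : WarpingPath m n, c = P.cost z s}.Nonempty :=
    ⟨_, stdPath m n hm hn, rfl⟩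
  have h0 : 0 ≤ sInf {c : ℝ | ∃ P : WarpingPath m n, c = P.cost z s} := by
    apply le_csInf hne
    rintro c ⟨Q, rfl⟩
    exact Q.cost_nonneg_s12 z s
  have hmem := hne.csInf_mem (costSet_finite m n z s)
  obtain ⟨P, hP⟩ := hmem
  exact ⟨P, by rw [dtw, Real.sq_sqrt h0]; exact hP⟩

lemma mean_min {γ : Type*} (T : Finset γ) (a : γ → ℝ) (x : ℝ) :
    ∑ t ∈ T, ((∑ u ∈ T, a u) / T.card - a t) ^ 2 ≤ ∑ t ∈ T, (x - a t) ^ 2 := by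
  rcases T.eq_empty_or_nonempty with rfl | hne
  · simp
  · set N : ℝ := (T.card : ℝ) with hN
    have hNpos : 0 < N := by
      rw [hN]
      exact_mod_cast Finset.card_pos.mpr hne
    set S : ℝ := ∑ u ∈ T, a u with hS
    have hc : N * (S / N) = S := by field_simp
    set c : ℝ := S / N with hcdef
    have expand : ∀ y : ℝ, ∑ t ∈ T, (y - a t) ^ 2
        = N * y ^ 2 - 2 * y * S + ∑ t ∈ T, (a t) ^ 2 := by
      intro y
      have : ∀ t ∈ T, (y - a t) ^ 2 = y ^ 2 - 2 * y * a t + (a t) ^ 2 :=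
        fun t _ => by ring
      rw [Finset.sum_congr rfl this]
      rw [Finset.sum_add_distrib, Finset.sum_sub_distrib, ← Finset.mul_sum,
        Finset.sum_const, nsmul_eq_mul, ← hS, ← hN]
    rw [expand, expand, show S = N * c from hc.symm]
    nlinarith [mul_nonneg hNpos.le (sq_nonneg (x - c))]

noncomputable def Phi {k : ℕ} (s : Fin k → ℕ → ℝ) (W : Fin k → Finset (ℕ × ℕ))
    (z : ℕ → ℝ) : ℝ :=
  ∑ l, ∑ v ∈ W l, (z v.1 - s l v.2) ^ 2

noncomputable def zOpt {k : ℕ} (s : Fin k → ℕ → ℝ) (W : Fin k → Finset (ℕ × ℕ)) :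
    ℕ → ℝ := fun i =>
  (∑ l, ∑ v ∈ (W l).filter (fun v => v.1 = i), s l v.2) /
  ((∑ l, ((W l).filter (fun v => v.1 = i)).card : ℕ) : ℝ)

lemma Phi_zOpt_le {k : ℕ} (s : Fin k → ℕ → ℝ) (W : Fin k → Finset (ℕ × ℕ))
    (z : ℕ → ℝ) : Phi s W (zOpt s W) ≤ Phi s W z := by
  classical
  set T : Finset (Σ _ : Fin k, ℕ × ℕ) := Finset.univ.sigma (fun l => W l) with hT
  set a : (Σ _ : Fin k, ℕ × ℕ) → ℝ := fun p => s p.1 p.2.2 with ha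
  set r : (Σ _ : Fin k, ℕ × ℕ) → ℕ := fun p => p.2.1 with hr
  have hPhi : ∀ y : ℕ → ℝ, Phi s W y = ∑ p ∈ T, (y (r p) - a p) ^ 2 := by
    intro y
    rw [Phi, hT, Finset.sum_sigma]
  have hTf : ∀ i, T.filter (fun p => r p = i) =
      Finset.univ.sigma (fun l => (W l).filter (fun v => v.1 = i)) := by
    intro i
    ext ⟨l, v⟩
    simp [hT, hr, Finset.mem_sigma, Finset.mem_filter]
  have hzOpt : ∀ i, zOpt s W i =
      (∑ p ∈ T.filter (fun p => r p = i), a p) / ((T.filter (fun p => r p = i)).card : ℝ) := by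
    intro i
    rw [zOpt, hTf i, Finset.sum_sigma, Finset.card_sigma]
  set I : Finset ℕ := T.image r with hI
  have hfib : ∀ y : ℕ → ℝ, ∑ p ∈ T, (y (r p) - a p) ^ 2 =
      ∑ i ∈ I, ∑ p ∈ T.filter (fun p => r p = i), (y (r p) - a p) ^ 2 := by
    intro y
    rw [Finset.sum_fiberwise_of_maps_to (fun p hp => Finset.mem_image_of_mem r hp)]
  rw [hPhi, hPhi, hfib, hfib]
  apply Finset.sum_le_sum
  intro i _
  have hcongr : ∀ y : ℕ → ℝ, ∑ p ∈ T.filter (fun p => r p = i), (y (r p) - a p) ^ 2 =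
      ∑ p ∈ T.filter (fun p => r p = i), (y i - a p) ^ 2 := by
    intro y
    apply Finset.sum_congr rfl
    intro p hp
    rw [Finset.mem_filter] at hp
    rw [hp.2]
  rw [hcongr, hcongr]
  have := mean_min (T.filter (fun p => r p = i)) a (z i)
  rw [← hzOpt i] at this
  exact this

section MainReduce
open WarpingPath

lemma reduce {k : ℕ} (hk : 1 ≤ k) (m : Fin k → ℕ) (hm : ∀ l, 2 ≤ m l)
    (s : Fin k → ℕ → ℝ) :
    ∀ N L (z' : ℕ → ℝ) (P : ∀ l : Fin k, WarpingPath L (m l)),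
      (∑ l, (P l).len) ≤ N →
      ∃ (L'' : ℕ) (z'' : ℕ → ℝ) (Q : ∀ l : Fin k, WarpingPath L'' (m l)),
        L'' + 2 * k ≤ (∑ l, m l) + 2 ∧
        ∑ l, (Q l).cost z'' (s l) ≤ ∑ l, (P l).cost z' (s l) := by
  intro N
  induction N with
  | zero =>
    intro L z' P hN
    exfalso
    have h1 := (P ⟨0, hk⟩).len_pos
    have h2 : (P ⟨0, hk⟩).len ≤ ∑ l, (P l).len :=
      Finset.single_le_sum (f := fun l => (P l).len) (fun l _ => Nat.zero_le _)
        (Finset.mem_univ _)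
    omega
  | succ N ih =>
    intro L z' P hN
    by_cases hdone : L + 2 * k ≤ (∑ l, m l) + 2
    · exact ⟨L, z', P, hdone, le_refl _⟩
    · have hsum2k : 2 * k ≤ ∑ l, m l := by
        calc 2 * k = ∑ _l : Fin k, 2 := by simp [Finset.sum_const, mul_comm]
        _ ≤ ∑ l, m l := Finset.sum_le_sum (fun l _ => hm l)
      have hL2 : 2 ≤ L := by omega
      have hsplit : (∃ l, (P l).Bappl) ∨ (∃ i, 2 ≤ i ∧ i < L ∧ ∀ l, (P l).Del i) := by
        by_contra hcon
        push_neg at hcon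
        obtain ⟨h1, h2⟩ := hcon
        exact hdone (count_bound m hm hL2 P h1 h2)
      rcases hsplit with ⟨l₀, hB⟩ | ⟨i₀, hi2, hiL, hDel⟩
      · obtain ⟨P', hlen, hsub⟩ := (P l₀).reduceB hB
        classical
        have hNle : ∑ l, (Function.update P l₀ P' l).len ≤ N := by
          have eA := Finset.add_sum_erase Finset.univ
            (fun l => (Function.update P l₀ P' l).len) (Finset.mem_univ l₀)
          have eB := Finset.add_sum_erase Finset.univ
            (fun l => (P l).len) (Finset.mem_univ l₀)
          have eC : ∑ l ∈ Finset.univ.erase l₀, (Function.update P l₀ P' l).len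
              = ∑ l ∈ Finset.univ.erase l₀, (P l).len :=
            Finset.sum_congr rfl
              (fun l hl => by rw [Function.update_of_ne (Finset.mem_erase.mp hl).1])
          beta_reduce at eA eB
          simp only [Function.update_self] at eA
          omega
        obtain ⟨L'', z'', R, hb, hc⟩ := ih L z' (Function.update P l₀ P') hNle
        refine ⟨L'', z'', R, hb, le_trans hc ?_⟩
        apply Finset.sum_le_sum
        intro l _
        by_cases hl : l = l₀
        · subst hl
          rw [Function.update_self]
          exact cost_le_of_subset hsub z' (s l)
        · rw [Function.update_of_ne hl]
      · have hred := fun l => (P l).reduceC hi2 hiL (hDel l)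
        choose P' hlen hsub using hred
        have hNle : ∑ l, (P' l).len ≤ N := by
          have : ∑ l, (P' l).len < ∑ l, (P l).len := by
            apply Finset.sum_lt_sum_of_nonempty
            · exact Finset.univ_nonempty_iff.mpr (Fin.pos_iff_nonempty.mp (by omega))
            · exact fun l _ => hlen l
          omega
        obtain ⟨L'', z''', R, hb, hc⟩ :=
          ih (L-1) (fun i => if i < i₀ then z' i else z' (i+1)) P' hNle
        refine ⟨L'', z''', R, hb, le_trans hc ?_⟩
        apply Finset.sum_le_sum
        intro l _
        exact cost_del (P' l) (P l) i₀ (hsub l) z' (s l)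

end MainReduce

theorem stmt12 (k : ℕ) (hk : 1 ≤ k) (m : Fin k → ℕ) (hm : ∀ l, 2 ≤ m l)
    (s : Fin k → ℕ → ℝ) :
    ∃ (L : ℕ) (z : ℕ → ℝ), 1 ≤ L ∧ L ≤ (∑ l : Fin k, m l) - 2 * (k - 1) ∧
      ∀ L' : ℕ, 1 ≤ L' → ∀ z' : ℕ → ℝ,
        (1 / (k : ℝ)) * ∑ l : Fin k, (dtw L (m l) z (s l)) ^ 2 ≤
          (1 / (k : ℝ)) * ∑ l : Fin k, (dtw L' (m l) z' (s l)) ^ 2 := by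
  classical
  have hsum2k : 2 * k ≤ ∑ l, m l := by
    calc 2 * k = ∑ _l : Fin k, 2 := by simp [Finset.sum_const, mul_comm]
    _ ≤ ∑ l, m l := Finset.sum_le_sum (fun l _ => hm l)
  set B : ℕ := (∑ l : Fin k, m l) - 2 * (k - 1) with hBdef
  have hB2 : 2 ≤ B := by omega
  set S : Set ℝ := {c | ∃ L, 1 ≤ L ∧ L ≤ B ∧
    ∃ Q : ∀ l : Fin k, WarpingPath L (m l),
      c = Phi s (fun l => (Q l).V) (zOpt s (fun l => (Q l).V))} with hS
  have hSfin : S.Finite := by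
    have h1 : ∀ l : Fin k, ({V : Finset (ℕ × ℕ) |
        V ⊆ Finset.range (B+1) ×ˢ Finset.range (m l + 1)}).Finite := by
      intro l
      apply Set.Finite.subset
        ((Finset.range (B+1) ×ˢ Finset.range (m l + 1)).powerset).finite_toSet
      intro V hV
      simp only [Finset.mem_coe, Finset.mem_powerset]
      exact hV
    have hWfin : {W : Fin k → Finset (ℕ × ℕ) |
        ∀ l, W l ⊆ Finset.range (B+1) ×ˢ Finset.range (m l + 1)}.Finite := by
      apply (Set.Finite.pi (fun l => h1 l)).subset
      intro W hW
      rw [Set.mem_pi]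
      exact fun l _ => hW l
    apply Set.Finite.subset (hWfin.image (fun W => Phi s W (zOpt s W)))
    rintro c ⟨L, hL1, hLB, Q, rfl⟩
    refine ⟨fun l => (Q l).V, ?_, rfl⟩
    intro l
    refine subset_trans (V_subset_box (Q l)) ?_
    exact Finset.product_subset_product
      (Finset.range_subset_range.mpr (by omega)) (subset_refl _)
  have hSne : S.Nonempty := by
    refine ⟨_, 2, by omega, by omega,
      fun l => stdPath 2 (m l) (by omega) (by have := hm l; omega), rfl⟩
  obtain ⟨L₀, hL₀1, hL₀B, Q₀, hc₀⟩ := hSne.csInf_mem hSfin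
  refine ⟨L₀, zOpt s (fun l => (Q₀ l).V), hL₀1, hL₀B, ?_⟩
  intro L' hL' z'
  have hk0 : (0:ℝ) ≤ 1 / (k:ℝ) := by positivity
  have main : ∑ l, dtw L₀ (m l) (zOpt s (fun l => (Q₀ l).V)) (s l) ^ 2 ≤
      ∑ l, dtw L' (m l) z' (s l) ^ 2 := by
    have lhs_le : ∑ l, dtw L₀ (m l) (zOpt s (fun l => (Q₀ l).V)) (s l) ^ 2 ≤ sInf S := by
      rw [hc₀]
      show _ ≤ ∑ l, ∑ v ∈ (Q₀ l).V,
        ((zOpt s (fun l => (Q₀ l).V)) v.1 - s l v.2) ^ 2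
      exact Finset.sum_le_sum (fun l _ => dtw_sq_le _ _ (Q₀ l))
    have rhs_ge : sInf S ≤ ∑ l, dtw L' (m l) z' (s l) ^ 2 := by
      have hopt : ∀ l, ∃ Pl : WarpingPath L' (m l),
          dtw L' (m l) z' (s l) ^ 2 = Pl.cost z' (s l) :=
        fun l => dtw_attain hL' (by have := hm l; omega) z' (s l)
      choose Popt hPopt using hopt
      obtain ⟨L'', z'', R, hb, hc⟩ :=
        reduce hk m hm s (∑ l, (Popt l).len) L' z' Popt le_rfl
      have hL''B : L'' ≤ B := by omega
      have hL''1 : 1 ≤ L'' := ((R ⟨0, hk⟩).order_pos).1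
      have hmem2 : Phi s (fun l => (R l).V) (zOpt s (fun l => (R l).V)) ∈ S :=
        ⟨L'', hL''1, hL''B, R, rfl⟩
      calc sInf S ≤ Phi s (fun l => (R l).V) (zOpt s (fun l => (R l).V)) :=
            csInf_le hSfin.bddBelow hmem2
      _ ≤ Phi s (fun l => (R l).V) z'' := Phi_zOpt_le s _ z''
      _ = ∑ l, (R l).cost z'' (s l) := rfl
      _ ≤ ∑ l, (Popt l).cost z' (s l) := hc
      _ = ∑ l, dtw L' (m l) z' (s l) ^ 2 :=
          Finset.sum_congr rfl (fun l _ => (hPopt l).symm)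
    linarith
  exact mul_le_mul_of_nonneg_left main hk0
end

section
/- Let T be a finite nonempty index set and, for each t ∈ T, let K_t ⊆ ℝ^n be a convex set. Then a point x ∈ ℝ^n lies in the convex hull of ⋃_{t∈T} K_t if and only if there exist λ_t ≥ 0 for t ∈ T with ∑_{t∈T} λ_t = 1 and points x^t ∈ ℝ^n with x = ∑_{t∈T} x^t such that for each t ∈ T: if λ_t = 0 then x^t = 0, and if λ_t > 0 then x^t / λ_t ∈ K_t (i.e., the pair (λ_t, x^t) satisfies the perspective constraint of K_t). -/
/-!
The set of points `∑ t, xt t` obtained from weights `lam` and pairs `(lam t, xt t)` in the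
perspective cones of the `K t` contains every `K t` (put all the weight on one index) and is
convex, because each perspective cone is closed under addition and nonnegative scaling; hence
it contains the convex hull of the union. Conversely, discarding the indices with `lam t = 0`
writes `∑ t, xt t` as the convex combination `∑ t, lam t • (lam t)⁻¹ • xt t` of points of the
`K t`.
-/

open Finset

section

variable {𝕜 E ι : Type*} [Field 𝕜] [LinearOrder 𝕜] [AddCommGroup E] [Module 𝕜 E]

/-- For `0 ≤ l`, this says that `(l, y)` lies in the closed cone over `{1} × K`. -/
def InPerspectiveCone (K : Set E) (l : 𝕜) (y : E) : Prop :=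
  (l = 0 → y = 0) ∧ (0 < l → l⁻¹ • y ∈ K)

namespace InPerspectiveCone

variable {K : Set E} {l m : 𝕜} {y z : E}

lemma smul_inv_smul (h : InPerspectiveCone K l y) : l • l⁻¹ • y = y := by
  rcases eq_or_ne l 0 with hl | hl
  · simp [hl, h.1 hl]
  · exact smul_inv_smul₀ hl y

variable [IsStrictOrderedRing 𝕜]

lemma smul (h : InPerspectiveCone K l y) {a : 𝕜} (ha : 0 ≤ a) :
    InPerspectiveCone K (a * l) (a • y) := by
  refine ⟨fun hal => ?_, fun hal => ?_⟩
  · rcases mul_eq_zero.1 hal with rfl | hl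
    · exact zero_smul 𝕜 y
    · rw [h.1 hl, smul_zero]
  · have hl : 0 < l := pos_of_mul_pos_right hal ha
    rw [mul_inv_rev, mul_smul, inv_smul_smul₀ (left_ne_zero_of_mul hal.ne')]
    exact h.2 hl

lemma add (hK : Convex 𝕜 K) (hl : 0 ≤ l) (hm : 0 ≤ m) (h : InPerspectiveCone K l y)
    (h' : InPerspectiveCone K m z) : InPerspectiveCone K (l + m) (y + z) := by
  rcases hl.eq_or_lt with rfl | hl
  · simpa [h.1 rfl] using h'
  rcases hm.eq_or_lt with rfl | hm
  · simpa [h'.1 rfl] using h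
  have hlm : 0 < l + m := add_pos hl hm
  refine ⟨fun h0 => absurd h0 hlm.ne', fun _ => ?_⟩
  -- `(l + m)⁻¹ • (y + z)` is the convex combination of `l⁻¹ • y` and `m⁻¹ • z` with weights
  -- proportional to `l` and `m`.
  have hmem := hK (h.2 hl) (h'.2 hm) (div_nonneg hl.le hlm.le) (div_nonneg hm.le hlm.le)
    (by rw [← add_div, div_self hlm.ne'])
  rwa [smul_smul, smul_smul, div_mul_eq_mul_div, div_mul_eq_mul_div, mul_inv_cancel₀ hl.ne',
    mul_inv_cancel₀ hm.ne', one_div, ← smul_add] at hmem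

end InPerspectiveCone

variable [IsStrictOrderedRing 𝕜] (𝕜) [Fintype ι]

/-- The projection of the extended formulation of the convex hull of `⋃ t, K t` from
disjunctive programming. -/
def disjunctiveHull (K : ι → Set E) : Set E :=
  {x | ∃ (lam : ι → 𝕜) (xt : ι → E), (∀ t, 0 ≤ lam t) ∧ ∑ t, lam t = 1 ∧ x = ∑ t, xt t ∧
    ∀ t, InPerspectiveCone (K t) (lam t) (xt t)}

variable {𝕜}

lemma subset_disjunctiveHull (K : ι → Set E) (t : ι) : K t ⊆ disjunctiveHull 𝕜 K := by
  classical
  intro y hy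
  refine ⟨Pi.single t 1, Pi.single t y, fun s => ?_, by simp, by simp, fun s => ?_⟩
  · rcases eq_or_ne s t with rfl | hs <;> simp [*]
  · rcases eq_or_ne s t with rfl | hs
    · simpa [InPerspectiveCone] using hy
    · simp [InPerspectiveCone, hs]

lemma convex_disjunctiveHull {K : ι → Set E} (hK : ∀ t, Convex 𝕜 (K t)) :
    Convex 𝕜 (disjunctiveHull 𝕜 K) := by
  rintro _ ⟨lam, xt, hlam, hlam1, rfl, hx⟩ _ ⟨mu, yt, hmu, hmu1, rfl, hy⟩ a b ha hb hab
  refine ⟨fun t => a * lam t + b * mu t, fun t => a • xt t + b • yt t,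
    fun t => by have := hlam t; have := hmu t; positivity, ?_, ?_,
    fun t => ((hx t).smul ha).add (hK t) (mul_nonneg ha (hlam t)) (mul_nonneg hb (hmu t))
      ((hy t).smul hb)⟩
  · rw [sum_add_distrib, ← mul_sum, ← mul_sum, hlam1, hmu1, mul_one, mul_one, hab]
  · rw [sum_add_distrib, smul_sum, smul_sum]

lemma disjunctiveHull_subset_convexHull (K : ι → Set E) :
    disjunctiveHull 𝕜 K ⊆ convexHull 𝕜 (⋃ t, K t) := by
  classical
  rintro _ ⟨lam, xt, hlam, hlam1, rfl, hx⟩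
  have hxt : ∑ t ∈ univ with lam t ≠ 0, xt t = ∑ t, xt t :=
    sum_filter_of_ne fun t _ hxt hlt => hxt ((hx t).1 hlt)
  rw [← hxt, ← sum_congr rfl fun t _ => (hx t).smul_inv_smul]
  refine (convex_convexHull 𝕜 _).sum_mem (fun t _ => hlam t)
    (by rw [sum_filter_ne_zero, hlam1]) fun t ht => subset_convexHull 𝕜 _ ?_
  exact Set.mem_iUnion.2 ⟨t, (hx t).2 ((hlam t).lt_of_ne' (mem_filter.1 ht).2)⟩

theorem convexHull_iUnion_eq_disjunctiveHull {K : ι → Set E} (hK : ∀ t, Convex 𝕜 (K t)) :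
    convexHull 𝕜 (⋃ t, K t) = disjunctiveHull 𝕜 K :=
  (convexHull_min (Set.iUnion_subset (subset_disjunctiveHull K))
    (convex_disjunctiveHull hK)).antisymm (disjunctiveHull_subset_convexHull K)

end

theorem stmt13_general {ι : Type*} [Fintype ι] (n : ℕ)
    (K : ι → Set (Fin n → ℝ)) (hK : ∀ t, Convex ℝ (K t)) (x : Fin n → ℝ) :
    x ∈ convexHull ℝ (⋃ t, K t) ↔
      ∃ (lam : ι → ℝ) (xt : ι → Fin n → ℝ),
        (∀ t, 0 ≤ lam t) ∧ (∑ t, lam t = 1) ∧ (x = ∑ t, xt t) ∧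
        (∀ t, (lam t = 0 → xt t = 0) ∧ (0 < lam t → (lam t)⁻¹ • xt t ∈ K t)) := by
  rw [convexHull_iUnion_eq_disjunctiveHull hK]
  rfl

theorem stmt13 {ι : Type*} [Fintype ι] [Nonempty ι] (n : ℕ)
    (K : ι → Set (Fin n → ℝ)) (hK : ∀ t, Convex ℝ (K t)) (x : Fin n → ℝ) :
    x ∈ convexHull ℝ (⋃ t, K t) ↔
      ∃ (lam : ι → ℝ) (xt : ι → Fin n → ℝ),
        (∀ t, 0 ≤ lam t) ∧ (∑ t, lam t = 1) ∧ (x = ∑ t, xt t) ∧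
        (∀ t, (lam t = 0 → xt t = 0) ∧ (0 < lam t → (lam t)⁻¹ • xt t ∈ K t)) :=
  stmt13_general n K hK x
end

section
/- Let s^1,…,s^k be time series with s^l ∈ ℝ^{m_l}, let n ≥ 1, and let lb_j ≤ ub_j be real numbers for j ∈ {1,…,n}. For l ∈ {1,…,k}, i ∈ {1,…,m_l}, j ∈ {1,…,n}, set M_{l,i,j} := max(|s^l_i − lb_j|, |ub_j − s^l_i|). For a tuple P = (P_1,…,P_k) of warping paths, where P_l has order m_l×n, define g(P) := min over z ∈ ∏_{j=1}^n [lb_j, ub_j] of (1/k) ∑_{l=1}^k ∑_{(i,j)∈V(P_l)} (z_j − s^l_i)² (the minimum exists since the feasible set is compact and the objective is continuous). Then for any two such tuples P = (P_1,…,P_k) and P̂ = (P̂_1,…,P̂_k): g(P) ≥ g(P̂) − (1/k) ∑_{l=1}^k ∑_{(i,j) ∈ V(P̂_l) \ V(P_l)} M_{l,i,j}². -/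
/-! Fix a minimiser `z` of the objective for `P`. Evaluating the objective for `P̂` at the same
`z` bounds `g(P̂)` from above. Vertices shared by `P̂_l` and `P_l` contribute no more than to the
objective for `P`, and for a vertex `(i, j)` of `P̂_l` only, `z_j ∈ [lb_j, ub_j]` gives
`(z_j − s^l_i)² ≤ M_{l,i,j}²`. -/

open Finset

lemma Finset.sum_le_sum_add_sum_sdiff {ι β : Type*} [DecidableEq ι] [AddCommMonoid β]
    [PartialOrder β] [IsOrderedAddMonoid β] {s t : Finset ι} {f B : ι → β}
    (hf : ∀ i ∈ s, 0 ≤ f i) (hfB : ∀ i ∈ t \ s, f i ≤ B i) :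
    ∑ i ∈ t, f i ≤ ∑ i ∈ s, f i + ∑ i ∈ t \ s, B i := by
  rw [← sum_inter_add_sum_sdiff t s f]
  gcongr ?_ + ?_
  · exact sum_le_sum_of_subset_of_nonneg inter_subset_right fun i hi _ => hf i hi
  · exact sum_le_sum hfB

lemma sq_sub_le_max_abs_sq {a b x z : ℝ} (haz : a ≤ z) (hzb : z ≤ b) :
    (z - x) ^ 2 ≤ max |x - a| |b - x| ^ 2 := by
  have ha : x - a ≤ max |x - a| |b - x| := (le_abs_self _).trans (le_max_left _ _)
  have hb : b - x ≤ max |x - a| |b - x| := (le_abs_self _).trans (le_max_right _ _)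
  exact sq_le_sq' (by linarith) (by linarith)

namespace WarpingPath

variable {m n : ℕ}

lemma snd_le_snd (P : WarpingPath m n) {t d : ℕ} (h : t + d < P.len) :
    (P.pt t).2 ≤ (P.pt (t + d)).2 := by
  induction d with
  | zero => rfl
  | succ d ih =>
    rcases P.step (t + d) (by omega) with hstep | hstep | hstep <;>
      · rw [← add_assoc, hstep]
        have := ih (by omega)
        simp only
        omega

lemma snd_mem_Icc_of_mem_V (P : WarpingPath m n) {v : ℕ × ℕ} (hv : v ∈ P.V) :
    v.2 ∈ Icc 1 n := by
  obtain ⟨t, ht, rfl⟩ := mem_image.1 hv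
  rw [mem_range] at ht
  have hfirst := P.snd_le_snd (t := 0) (d := t) (by omega)
  have hlast := P.snd_le_snd (t := t) (d := P.len - 1 - t) (by omega)
  rw [zero_add, P.first] at hfirst
  rw [Nat.add_sub_of_le (by omega), P.last] at hlast
  exact mem_Icc.2 ⟨hfirst, hlast⟩

lemma sum_sq_le_sum_sq_add_sum_sdiff (P Q : WarpingPath m n) (x : ℕ → ℝ)
    {lb ub z : ℕ → ℝ} (hz : ∀ j ∈ Icc 1 n, lb j ≤ z j ∧ z j ≤ ub j) :
    ∑ v ∈ Q.V, (z v.2 - x v.1) ^ 2 ≤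
      ∑ v ∈ P.V, (z v.2 - x v.1) ^ 2 +
        ∑ v ∈ Q.V \ P.V, max |x v.1 - lb v.2| |ub v.2 - x v.1| ^ 2 := by
  refine sum_le_sum_add_sum_sdiff (fun _ _ => sq_nonneg _) fun v hv => ?_
  obtain ⟨hlb, hub⟩ := hz v.2 (Q.snd_mem_Icc_of_mem_V (mem_sdiff.1 hv).1)
  exact sq_sub_le_max_abs_sq hlb hub

end WarpingPath

theorem stmt14_general (k : ℕ) (m : Fin k → ℕ)
    (s : Fin k → ℕ → ℝ) (n : ℕ)
    (lb ub : ℕ → ℝ)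
    (M : Fin k → ℕ → ℕ → ℝ)
    (hM : ∀ l i j, M l i j = max |s l i - lb j| |ub j - s l i|)
    (g : (∀ l : Fin k, WarpingPath (m l) n) → ℝ)
    (hg : ∀ P : ∀ l : Fin k, WarpingPath (m l) n,
      IsLeast {r : ℝ | ∃ z : ℕ → ℝ, (∀ j ∈ Finset.Icc 1 n, lb j ≤ z j ∧ z j ≤ ub j) ∧
        r = (1 / (k : ℝ)) * ∑ l : Fin k, ∑ v ∈ (P l).V, (z v.2 - s l v.1) ^ 2} (g P))
    (P Phat : ∀ l : Fin k, WarpingPath (m l) n) :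
    g P ≥ g Phat -
      (1 / (k : ℝ)) * ∑ l : Fin k, ∑ v ∈ (Phat l).V \ (P l).V, (M l v.1 v.2) ^ 2 := by
  obtain ⟨⟨z, hz, hgP⟩, -⟩ := hg P
  have hgPhat := (hg Phat).2 ⟨z, hz, rfl⟩
  simp only [hM]
  calc g Phat - (1 / (k : ℝ)) * ∑ l, ∑ v ∈ (Phat l).V \ (P l).V,
          max |s l v.1 - lb v.2| |ub v.2 - s l v.1| ^ 2
      ≤ (1 / (k : ℝ)) * ∑ l, (∑ v ∈ (Phat l).V, (z v.2 - s l v.1) ^ 2 -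
          ∑ v ∈ (Phat l).V \ (P l).V, max |s l v.1 - lb v.2| |ub v.2 - s l v.1| ^ 2) := by
        rw [sum_sub_distrib, mul_sub]
        exact sub_le_sub_right hgPhat _
    _ ≤ (1 / (k : ℝ)) * ∑ l, ∑ v ∈ (P l).V, (z v.2 - s l v.1) ^ 2 := by
        gcongr with l
        exact sub_le_iff_le_add.2 ((P l).sum_sq_le_sum_sq_add_sum_sdiff (Phat l) (s l) hz)
    _ = g P := hgP.symm

theorem stmt14 (k : ℕ) (hk : 1 ≤ k) (m : Fin k → ℕ) (hm : ∀ l, 1 ≤ m l)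
    (s : Fin k → ℕ → ℝ) (n : ℕ) (hn : 1 ≤ n)
    (lb ub : ℕ → ℝ) (hlu : ∀ j ∈ Finset.Icc 1 n, lb j ≤ ub j)
    (M : Fin k → ℕ → ℕ → ℝ)
    (hM : ∀ l i j, M l i j = max |s l i - lb j| |ub j - s l i|)
    (g : (∀ l : Fin k, WarpingPath (m l) n) → ℝ)
    (hg : ∀ P : ∀ l : Fin k, WarpingPath (m l) n,
      IsLeast {r : ℝ | ∃ z : ℕ → ℝ, (∀ j ∈ Finset.Icc 1 n, lb j ≤ z j ∧ z j ≤ ub j) ∧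
        r = (1 / (k : ℝ)) * ∑ l : Fin k, ∑ v ∈ (P l).V, (z v.2 - s l v.1) ^ 2} (g P))
    (P Phat : ∀ l : Fin k, WarpingPath (m l) n) :
    g P ≥ g Phat -
      (1 / (k : ℝ)) * ∑ l : Fin k, ∑ v ∈ (Phat l).V \ (P l).V, (M l v.1 v.2) ^ 2 :=
  stmt14_general k m s n lb ub M hM g hg P Phat
end

section
/- Let s^1,…,s^k be time series with s^l ∈ ℝ^{m_l}, let n ≥ 1, and let P_1,…,P_k be warping paths where P_l has order m_l×n. Consider variables d_{l,v} and δ_{l,v} for l ∈ {1,…,k} and v = (i,j) ∈ {1,…,m_l}×{1,…,n}, and z ∈ ℝ^n, subject to the constraints d_{l,v} ≥ (z_j − s^l_i)² − δ_{l,v}, d_{l,v} ≥ 0, and δ_{l,v} ≥ 0 for all l and v = (i,j). Then the infimum over all feasible (d, δ, z) of ∑_{l=1}^k ∑_{v} (1/k)·d_{l,v} + ∑_{l=1}^k ∑_{v ∈ V(P_l)} (1/k)·δ_{l,v} equals min over z ∈ ℝ^n of (1/k) ∑_{l=1}^k ∑_{(i,j)∈V(P_l)} (z_j − s^l_i)²,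 and this infimum is attained at (d*, δ*, z*) given by: z*_j := (∑_{l=1}^k ∑_{i : (i,j)∈V(P_l)} s^l_i) / (∑_{l=1}^k |{i : (i,j)∈V(P_l)}|); d*_{l,v} := (z*_j − s^l_i)² if v = (i,j) ∈ V(P_l) and 0 otherwise; δ*_{l,v} := 0 if v ∈ V(P_l) and (z*_j − s^l_i)² otherwise. -/
open Finset
open scoped BigOperators

namespace WarpingPath

variable {m n : ℕ} (P : WarpingPath m n)

theorem pt_le_pt {a b : ℕ} (hab : a ≤ b) (hb : b < P.len) : P.pt a ≤ P.pt b := by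
  induction b, hab using Nat.le_induction with
  | base => exact le_rfl
  | succ b _ ih =>
    refine (ih (by omega)).trans ?_
    rcases P.step b hb with h | h | h <;> simp [h, Prod.le_def]

theorem V_subset_Icc : P.V ⊆ Icc 1 m ×ˢ Icc 1 n := by
  intro v hv
  obtain ⟨t, ht, rfl⟩ := mem_image.1 hv
  have ht : t < P.len := mem_range.1 ht
  have hfirst := P.first ▸ P.pt_le_pt (Nat.zero_le t) ht
  have hlast := P.last ▸ P.pt_le_pt (Nat.le_sub_one_of_lt ht) (by omega)
  exact mem_product.2 ⟨mem_Icc.2 ⟨hfirst.1, hlast.1⟩, mem_Icc.2 ⟨hfirst.2, hlast.2⟩⟩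

end WarpingPath

theorem Finset.sum_expect_sub_sq_le {ι : Type*} (S : Finset ι) (a : ι → ℝ) (z : ℝ) :
    ∑ i ∈ S, (𝔼 j ∈ S, a j - a i) ^ 2 ≤ ∑ i ∈ S, (z - a i) ^ 2 := by
  set μ := 𝔼 j ∈ S, a j
  have hsplit : ∀ i, (z - a i) ^ 2 = (μ - a i) ^ 2 + 2 * (z - μ) * (μ - a i) + (z - μ) ^ 2 :=
    fun i => by ring
  have hcentered : ∑ i ∈ S, (μ - a i) = 0 := by
    rw [sum_sub_distrib, sum_const, nsmul_eq_mul, card_mul_expect, sub_self]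
  rw [sum_congr rfl fun i _ => hsplit i, sum_add_distrib, sum_add_distrib, ← mul_sum,
    hcentered, mul_zero, add_zero]
  exact le_add_of_nonneg_right (sum_nonneg fun _ _ => sq_nonneg _)

theorem Finset.sum_le_sum_add_sum_of_le_add {ι : Type*} {V B : Finset ι} (hVB : V ⊆ B)
    {f d δ : ι → ℝ} (hf : ∀ v ∈ V, f v ≤ d v + δ v) (hd : ∀ v ∈ B, 0 ≤ d v) :
    ∑ v ∈ V, f v ≤ ∑ v ∈ B, d v + ∑ v ∈ V, δ v :=
  calc ∑ v ∈ V, f v ≤ ∑ v ∈ V, (d v + δ v) := sum_le_sum hf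
    _ = ∑ v ∈ V, d v + ∑ v ∈ V, δ v := sum_add_distrib
    _ ≤ ∑ v ∈ B, d v + ∑ v ∈ V, δ v :=
      add_le_add (sum_le_sum_of_subset_of_nonneg hVB fun v hv _ => hd v hv) le_rfl

def IsFeasible {k : ℕ} (m : Fin k → ℕ) (n : ℕ) (s : Fin k → ℕ → ℝ)
    (d δ : Fin k → ℕ × ℕ → ℝ) (z : ℕ → ℝ) : Prop :=
  ∀ l, ∀ v ∈ Icc 1 (m l) ×ˢ Icc 1 n,
    d l v ≥ (z v.2 - s l v.1) ^ 2 - δ l v ∧ 0 ≤ d l v ∧ 0 ≤ δ l v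

section Barycenter

variable {k : ℕ} {m : Fin k → ℕ} {n : ℕ} (P : ∀ l, WarpingPath (m l) n) (s : Fin k → ℕ → ℝ)

def columnVertices (j : ℕ) : Finset (Σ _ : Fin k, ℕ × ℕ) :=
  univ.sigma fun l => (P l).V.filter (·.2 = j)

noncomputable def warpingCost (z : ℕ → ℝ) : ℝ :=
  ∑ l, ∑ v ∈ (P l).V, (z v.2 - s l v.1) ^ 2

noncomputable def columnMean (j : ℕ) : ℝ :=
  𝔼 x ∈ columnVertices P j, s x.1 x.2.1

theorem columnMean_eq (j : ℕ) : columnMean P s j =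
    (∑ l, ∑ v ∈ (P l).V.filter (·.2 = j), s l v.1) /
      ((∑ l, ((P l).V.filter (·.2 = j)).card : ℕ) : ℝ) := by
  rw [columnMean, expect_eq_sum_div_card, columnVertices, sum_sigma, card_sigma]

theorem warpingCost_eq_sum_columns (z : ℕ → ℝ) : warpingCost P s z =
    ∑ j ∈ Icc 1 n, ∑ x ∈ columnVertices P j, (z j - s x.1 x.2.1) ^ 2 := by
  simp only [columnVertices, sum_sigma]
  rw [warpingCost, sum_comm]
  refine sum_congr rfl fun l _ => ?_
  rw [← sum_fiberwise_of_maps_to fun v hv => (mem_product.1 ((P l).V_subset_Icc hv)).2]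
  exact sum_congr rfl fun j _ => sum_congr rfl fun v hv => by rw [(mem_filter.1 hv).2]

theorem warpingCost_columnMean_le (z : ℕ → ℝ) :
    warpingCost P s (columnMean P s) ≤ warpingCost P s z := by
  rw [warpingCost_eq_sum_columns, warpingCost_eq_sum_columns]
  exact sum_le_sum fun j _ => sum_expect_sub_sq_le _ _ _

noncomputable def relaxedObjective (d δ : Fin k → ℕ × ℕ → ℝ) : ℝ :=
  (∑ l, ∑ v ∈ Icc 1 (m l) ×ˢ Icc 1 n, 1 / (k : ℝ) * d l v) +
    ∑ l, ∑ v ∈ (P l).V, 1 / (k : ℝ) * δ l v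

theorem warpingCost_le_relaxedObjective {d δ : Fin k → ℕ × ℕ → ℝ} {z : ℕ → ℝ}
    (h : IsFeasible m n s d δ z) :
    1 / (k : ℝ) * warpingCost P s z ≤ relaxedObjective P d δ := by
  simp only [relaxedObjective, warpingCost, ← mul_sum, ← mul_add, ← sum_add_distrib]
  gcongr with l
  exact sum_le_sum_add_sum_of_le_add (P l).V_subset_Icc
    (fun v hv => by linarith [(h l v ((P l).V_subset_Icc hv)).1]) fun v hv => (h l v hv).2.1

theorem isFeasible_split (z : ℕ → ℝ) :
    IsFeasible m n s (fun l v => if v ∈ (P l).V then (z v.2 - s l v.1) ^ 2 else 0)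
      (fun l v => if v ∈ (P l).V then 0 else (z v.2 - s l v.1) ^ 2) z := by
  intro l v _
  dsimp only
  split_ifs <;> simp [sq_nonneg]

theorem relaxedObjective_split (z : ℕ → ℝ) :
    relaxedObjective P (fun l v => if v ∈ (P l).V then (z v.2 - s l v.1) ^ 2 else 0)
      (fun l v => if v ∈ (P l).V then 0 else (z v.2 - s l v.1) ^ 2) =
      1 / (k : ℝ) * warpingCost P s z := by
  simp only [relaxedObjective, warpingCost, mul_sum, mul_ite, mul_zero, sum_ite_mem,
    inter_eq_right.2 (P _).V_subset_Icc]
  exact add_eq_left.2 (sum_eq_zero fun l _ => sum_eq_zero fun v hv => if_pos hv)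

end Barycenter

theorem stmt15_general (k : ℕ) (m : Fin k → ℕ)
    (s : Fin k → ℕ → ℝ) (n : ℕ)
    (P : ∀ l : Fin k, WarpingPath (m l) n)
    (zstar : ℕ → ℝ)
    (hzstar : ∀ j : ℕ, zstar j =
      (∑ l : Fin k, ∑ v ∈ (P l).V.filter (fun v => v.2 = j), s l v.1) /
      ((∑ l : Fin k, ((P l).V.filter (fun v => v.2 = j)).card : ℕ) : ℝ))
    (dstar deltastar : Fin k → ℕ × ℕ → ℝ)
    (hdstar : ∀ (l : Fin k) (v : ℕ × ℕ),
      dstar l v = if v ∈ (P l).V then (zstar v.2 - s l v.1) ^ 2 else 0)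
    (hdeltastar : ∀ (l : Fin k) (v : ℕ × ℕ),
      deltastar l v = if v ∈ (P l).V then 0 else (zstar v.2 - s l v.1) ^ 2) :
    -- `(dstar, deltastar, zstar)` is feasible
    (∀ (l : Fin k), ∀ v ∈ Finset.Icc 1 (m l) ×ˢ Finset.Icc 1 n,
      dstar l v ≥ (zstar v.2 - s l v.1) ^ 2 - deltastar l v ∧
      0 ≤ dstar l v ∧ 0 ≤ deltastar l v) ∧
    -- the infimum over all feasible `(d, delta, z)` of the objective is attained
    -- at the objective value of `(dstar, deltastar, zstar)`
    IsLeast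
      {r : ℝ | ∃ (d delta : Fin k → ℕ × ℕ → ℝ) (z : ℕ → ℝ),
        (∀ (l : Fin k), ∀ v ∈ Finset.Icc 1 (m l) ×ˢ Finset.Icc 1 n,
          d l v ≥ (z v.2 - s l v.1) ^ 2 - delta l v ∧ 0 ≤ d l v ∧ 0 ≤ delta l v) ∧
        r = (∑ l : Fin k, ∑ v ∈ Finset.Icc 1 (m l) ×ˢ Finset.Icc 1 n,
              (1 / (k : ℝ)) * d l v) +
            ∑ l : Fin k, ∑ v ∈ (P l).V, (1 / (k : ℝ)) * delta l v}
      ((∑ l : Fin k, ∑ v ∈ Finset.Icc 1 (m l) ×ˢ Finset.Icc 1 n,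
          (1 / (k : ℝ)) * dstar l v) +
        ∑ l : Fin k, ∑ v ∈ (P l).V, (1 / (k : ℝ)) * deltastar l v) ∧
    -- and this value equals the minimum over `z ∈ ℝ^n` of
    -- `(1/k) ∑_l ∑_{(i,j) ∈ V(P_l)} (z_j − s^l_i)²`
    IsLeast
      {r : ℝ | ∃ z : ℕ → ℝ,
        r = (1 / (k : ℝ)) * ∑ l : Fin k, ∑ v ∈ (P l).V, (z v.2 - s l v.1) ^ 2}
      ((∑ l : Fin k, ∑ v ∈ Finset.Icc 1 (m l) ×ˢ Finset.Icc 1 n,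
          (1 / (k : ℝ)) * dstar l v) +
        ∑ l : Fin k, ∑ v ∈ (P l).V, (1 / (k : ℝ)) * deltastar l v) := by
  obtain rfl : zstar = columnMean P s :=
    funext fun j => (hzstar j).trans (columnMean_eq P s j).symm
  obtain rfl := funext₂ hdstar
  obtain rfl := funext₂ hdeltastar
  have hmin : ∀ z, 1 / (k : ℝ) * warpingCost P s (columnMean P s) ≤ 1 / k * warpingCost P s z :=
    fun z => by gcongr; exact warpingCost_columnMean_le P s z
  refine ⟨isFeasible_split P s _, ⟨⟨_, _, _, isFeasible_split P s _, rfl⟩, ?_⟩,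
    ⟨columnMean P s, relaxedObjective_split P s _⟩, ?_⟩
  · rintro _ ⟨d, δ, z, hfeas, rfl⟩
    exact (relaxedObjective_split P s _).trans_le
      ((hmin z).trans (warpingCost_le_relaxedObjective P s hfeas))
  · rintro _ ⟨z, rfl⟩
    exact (relaxedObjective_split P s _).trans_le (hmin z)

theorem stmt15 (k : ℕ) (hk : 1 ≤ k) (m : Fin k → ℕ) (hm : ∀ l, 1 ≤ m l)
    (s : Fin k → ℕ → ℝ) (n : ℕ) (hn : 1 ≤ n)
    (P : ∀ l : Fin k, WarpingPath (m l) n)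
    (zstar : ℕ → ℝ)
    (hzstar : ∀ j : ℕ, zstar j =
      (∑ l : Fin k, ∑ v ∈ (P l).V.filter (fun v => v.2 = j), s l v.1) /
      ((∑ l : Fin k, ((P l).V.filter (fun v => v.2 = j)).card : ℕ) : ℝ))
    (dstar deltastar : Fin k → ℕ × ℕ → ℝ)
    (hdstar : ∀ (l : Fin k) (v : ℕ × ℕ),
      dstar l v = if v ∈ (P l).V then (zstar v.2 - s l v.1) ^ 2 else 0)
    (hdeltastar : ∀ (l : Fin k) (v : ℕ × ℕ),
      deltastar l v = if v ∈ (P l).V then 0 else (zstar v.2 - s l v.1) ^ 2) :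
    -- `(dstar, deltastar, zstar)` is feasible
    (∀ (l : Fin k), ∀ v ∈ Finset.Icc 1 (m l) ×ˢ Finset.Icc 1 n,
      dstar l v ≥ (zstar v.2 - s l v.1) ^ 2 - deltastar l v ∧
      0 ≤ dstar l v ∧ 0 ≤ deltastar l v) ∧
    -- the infimum over all feasible `(d, delta, z)` of the objective is attained
    -- at the objective value of `(dstar, deltastar, zstar)`
    IsLeast
      {r : ℝ | ∃ (d delta : Fin k → ℕ × ℕ → ℝ) (z : ℕ → ℝ),
        (∀ (l : Fin k), ∀ v ∈ Finset.Icc 1 (m l) ×ˢ Finset.Icc 1 n,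
          d l v ≥ (z v.2 - s l v.1) ^ 2 - delta l v ∧ 0 ≤ d l v ∧ 0 ≤ delta l v) ∧
        r = (∑ l : Fin k, ∑ v ∈ Finset.Icc 1 (m l) ×ˢ Finset.Icc 1 n,
              (1 / (k : ℝ)) * d l v) +
            ∑ l : Fin k, ∑ v ∈ (P l).V, (1 / (k : ℝ)) * delta l v}
      ((∑ l : Fin k, ∑ v ∈ Finset.Icc 1 (m l) ×ˢ Finset.Icc 1 n,
          (1 / (k : ℝ)) * dstar l v) +
        ∑ l : Fin k, ∑ v ∈ (P l).V, (1 / (k : ℝ)) * deltastar l v) ∧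
    -- and this value equals the minimum over `z ∈ ℝ^n` of
    -- `(1/k) ∑_l ∑_{(i,j) ∈ V(P_l)} (z_j − s^l_i)²`
    IsLeast
      {r : ℝ | ∃ z : ℕ → ℝ,
        r = (1 / (k : ℝ)) * ∑ l : Fin k, ∑ v ∈ (P l).V, (z v.2 - s l v.1) ^ 2}
      ((∑ l : Fin k, ∑ v ∈ Finset.Icc 1 (m l) ×ˢ Finset.Icc 1 n,
          (1 / (k : ℝ)) * dstar l v) +
        ∑ l : Fin k, ∑ v ∈ (P l).V, (1 / (k : ℝ)) * deltastar l v) :=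
  stmt15_general k m s n P zstar hzstar dstar deltastar hdstar hdeltastar
end
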